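/- arXiv:1507.04324 — 6 statements merged into one kernel-verified Lean document; each statement's English description precedes it below -/
import Mathlib

section
/- If f : ℝ → ℝ satisfies f(t) ≥ f(t₀) for all t < t₀, the Caputo integral at t₀ converges, and ∂ₜ^α f(t₀) = 0, then f(t) = f(t₀) for all t < t₀, provided f is continuous. -/
open Set MeasureTheory

/-- The one-sided (extended Caputo) fractional derivative of order `α`. -/
noncomputable def caputo (α : ℝ) (f : ℝ → ℝ) (t : ℝ) : ℝ :=
  (α / Real.Gamma (1 - α)) * ∫ s in Set.Iio t, (f t - f s) / (t - s) ^ (1 + α)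

/-- If `f` is continuous, `f t ≥ f t₀` for all `t < t₀`, the Caputo integral at `t₀`
converges, and the Caputo derivative at `t₀` vanishes, then `f t = f t₀` for all `t < t₀`. -/
theorem caputo_eq_zero_at_min (α : ℝ) (hα : 0 < α) (hα1 : α < 1)
    (f : ℝ → ℝ) (t₀ : ℝ) (hf : Continuous f)
    (hmin : ∀ t < t₀, f t₀ ≤ f t)
    (hint : IntegrableOn (fun s => (f t₀ - f s) / (t₀ - s) ^ (1 + α)) (Set.Iio t₀))
    (hzero : caputo α f t₀ = 0) :
    ∀ t < t₀, f t = f t₀ := by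
  intro t ht
  by_contra hne
  have hlt : f t₀ < f t := lt_of_le_of_ne (hmin t ht) (Ne.symm hne)
  have hΓ : 0 < Real.Gamma (1 - α) := Real.Gamma_pos_of_pos (by linarith)
  have hcoef : α / Real.Gamma (1 - α) ≠ 0 := by positivity
  have hI : ∫ s in Set.Iio t₀, (f t₀ - f s) / (t₀ - s) ^ (1 + α) = 0 := by
    unfold caputo at hzero
    rcases mul_eq_zero.mp hzero with h | h
    · exact absurd h hcoef
    · exact h
  set g : ℝ → ℝ := fun s => -((f t₀ - f s) / (t₀ - s) ^ (1 + α)) with hg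
  have hgint : Integrable g (volume.restrict (Set.Iio t₀)) := hint.neg
  have hgnn : 0 ≤ᵐ[volume.restrict (Set.Iio t₀)] g := by
    refine (ae_restrict_iff' measurableSet_Iio).mpr (Filter.Eventually.of_forall ?_)
    intro s hs
    have h1 : 0 < t₀ - s := by simp only [Set.mem_Iio] at hs; linarith
    have h2 : 0 ≤ (t₀ - s) ^ (1 + α) := (Real.rpow_pos_of_pos h1 _).le
    have h3 := hmin s hs
    simp only [hg, Pi.zero_apply, neg_div', neg_sub, neg_neg]
    exact div_nonneg (by linarith) h2
  have hIg : ∫ s in Set.Iio t₀, g s = 0 := by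
    simp only [hg, integral_neg, hI, neg_zero]
  have hae : g =ᵐ[volume.restrict (Set.Iio t₀)] 0 :=
    (integral_eq_zero_iff_of_nonneg_ae hgnn hgint).mp hIg
  have hmeas : volume ({s | g s ≠ 0} ∩ Set.Iio t₀) = 0 := by
    have := ae_iff.mp hae
    rwa [Measure.restrict_apply' measurableSet_Iio] at this
  set U : Set ℝ := (f ⁻¹' Set.Ioi (f t₀)) ∩ Set.Iio t₀ with hU
  have hUopen : IsOpen U := (isOpen_Ioi.preimage hf).inter isOpen_Iio
  have htU : t ∈ U := ⟨hlt, ht⟩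
  have hUsub : U ⊆ {s | g s ≠ 0} ∩ Set.Iio t₀ := by
    rintro s ⟨hs1, hs2⟩
    refine ⟨?_, hs2⟩
    have h1 : 0 < t₀ - s := by simp only [Set.mem_Iio] at hs2; linarith
    have h2 : 0 < (t₀ - s) ^ (1 + α) := Real.rpow_pos_of_pos h1 _
    have hs1' : f t₀ < f s := hs1
    have : 0 < (f s - f t₀) / (t₀ - s) ^ (1 + α) := div_pos (by linarith) h2
    simp only [hg, Set.mem_setOf_eq, neg_div', neg_sub, neg_neg]
    intro hcontra
    rw [hcontra] at this
    exact lt_irrefl 0 this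
  have hUpos : 0 < volume U := hUopen.measure_pos volume ⟨t, htU⟩
  have : volume U = 0 := le_antisymm (hmeas ▸ measure_mono hUsub) zero_le
  exact absurd this hUpos.ne'
end

section
/- For a continuously differentiable function f : [a,∞) → ℝ and t > a, the classical Caputo derivative (1/Γ(1-α)) ∫_a^t f'(s)/(t-s)^α ds equals (1/Γ(1-α)) (f(t)-f(a))/(t-a)^α + (α/Γ(1-α)) ∫_a^t (f(t)-f(s))/(t-s)^{1+α} ds. -/
open Set MeasureTheory intervalIntegral

/-- Integration by parts formula for the classical Caputo derivative of a `C¹` function. -/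
theorem caputo_integration_by_parts (α a t : ℝ) (hα : 0 < α) (hα1 : α < 1)
    (f : ℝ → ℝ) (hf : ContDiffOn ℝ 1 f (Set.Ici a)) (ht : a < t) :
    (1 / Real.Gamma (1 - α)) * ∫ s in a..t, deriv f s / (t - s) ^ α
      = (1 / Real.Gamma (1 - α)) * (f t - f a) / (t - a) ^ α
        + (α / Real.Gamma (1 - α)) * ∫ s in a..t, (f t - f s) / (t - s) ^ (1 + α) := by
  have hta : (0:ℝ) < t - a := sub_pos.2 ht
  -- continuity of the (within) derivative
  have hd : ContinuousOn (derivWithin f (Set.Ici a)) (Set.Ici a) :=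
    hf.continuousOn_derivWithin (uniqueDiffOn_Ici a) le_rfl
  have hdiff : DifferentiableOn ℝ f (Set.Ici a) := hf.differentiableOn one_ne_zero
  have hfc : ContinuousOn f (Set.Ici a) := hf.continuousOn
  -- Lipschitz bound on [a, t]
  obtain ⟨C, hC⟩ : ∃ C, ∀ s ∈ Set.Icc a t, ‖derivWithin f (Set.Ici a) s‖ ≤ C :=
    (isCompact_Icc (a := a) (b := t)).exists_bound_of_continuousOn
      (hd.mono Icc_subset_Ici_self)
  have hlip : ∀ s ∈ Set.Icc a t, |f t - f s| ≤ C * (t - s) := by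
    intro s hs
    have h1 : ∀ x ∈ Set.Icc a t,
        HasDerivWithinAt f (derivWithin f (Set.Ici a) x) (Set.Icc a t) x := by
      intro x hx
      exact ((hdiff x hx.1).hasDerivWithinAt).mono Icc_subset_Ici_self
    have := (convex_Icc a t).norm_image_sub_le_of_norm_hasDerivWithin_le h1 hC
      hs (Set.right_mem_Icc.2 ht.le)
    simpa [Real.norm_eq_abs, abs_of_nonneg (sub_nonneg.2 hs.2)] using this
  -- deriv = derivWithin on (a, ∞)
  have hde : ∀ s, a < s → derivWithin f (Set.Ici a) s = deriv f s := by
    intro s hs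
    exact derivWithin_of_mem_nhds (Ici_mem_nhds hs)
  -- basic integrability
  have I1 : IntervalIntegrable (fun s : ℝ => (t - s) ^ (-α)) volume a t := by
    have h := (intervalIntegral.intervalIntegrable_rpow' (a := (0:ℝ)) (b := t - a)
      (r := -α) (by linarith)).comp_sub_left t
    simp only [sub_zero, sub_sub_cancel] at h
    exact h.symm
  have I2 : IntervalIntegrable (fun s => deriv f s * (t - s) ^ (-α)) volume a t := by
    have h := I1.continuousOn_mul (g := derivWithin f (Set.Ici a))
      (by rw [uIcc_of_le ht.le]; exact hd.mono Icc_subset_Ici_self)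
    rw [intervalIntegrable_iff_integrableOn_Ioc_of_le ht.le] at h ⊢
    exact h.congr_fun (fun s hs => by simp only [hde s hs.1]) measurableSet_Ioc
  have I3 : IntervalIntegrable (fun s => (f t - f s) * (α * (t - s) ^ (-α - 1)))
      volume a t := by
    have hmeas : AEStronglyMeasurable (fun s => (f t - f s) * (α * (t - s) ^ (-α - 1)))
        (volume.restrict (Set.uIoc a t)) := by
      rw [uIoc_of_le ht.le, ← restrict_Ioo_eq_restrict_Ioc]
      apply ContinuousOn.aestronglyMeasurable _ measurableSet_Ioo
      intro s hs
      have hts : (0:ℝ) < t - s := sub_pos.2 hs.2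
      exact (continuousWithinAt_const.sub
          ((hfc s (le_of_lt hs.1)).mono (fun x hx => le_of_lt hx.1))).mul
        (continuousWithinAt_const.mul
          ((continuousWithinAt_const.sub continuousWithinAt_id).rpow_const
            (Or.inl hts.ne')))
    apply (I1.const_mul (C * α)).mono_fun hmeas
    rw [uIoc_of_le ht.le, ← restrict_Ioo_eq_restrict_Ioc]
    filter_upwards [ae_restrict_mem measurableSet_Ioo] with s hs
    have hts : (0:ℝ) < t - s := sub_pos.2 hs.2
    have hpow : (t - s) * (t - s) ^ (-α - 1) = (t - s) ^ (-α) := by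
      nth_rewrite 1 [← Real.rpow_one (t - s)]
      rw [← Real.rpow_add hts]
      congr 1
      ring
    have hnn : 0 ≤ α * (t - s) ^ (-α - 1) :=
      mul_nonneg hα.le (Real.rpow_nonneg hts.le _)
    calc ‖(f t - f s) * (α * (t - s) ^ (-α - 1))‖
        = |f t - f s| * (α * (t - s) ^ (-α - 1)) := by
          rw [Real.norm_eq_abs, abs_mul, abs_of_nonneg hnn]
      _ ≤ (C * (t - s)) * (α * (t - s) ^ (-α - 1)) :=
          mul_le_mul_of_nonneg_right
            (hlip s ⟨hs.1.le, hs.2.le⟩) hnn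
      _ = C * α * ((t - s) ^ (-α)) := by rw [← hpow]; ring
      _ ≤ ‖C * α * (t - s) ^ (-α)‖ := le_abs_self _
  -- the auxiliary function G
  set G : ℝ → ℝ := fun s => (f t - f s) * (t - s) ^ (-α) with hG
  have hGt : G t = 0 := by simp [hG]
  have hGbound : ∀ s ∈ Set.Icc a t, ‖G s‖ ≤ C * (t - s) ^ (1 - α) := by
    intro s hs
    rcases eq_or_lt_of_le hs.2 with h | h
    · simp [hG, h, Real.zero_rpow (show (1:ℝ) - α ≠ 0 by linarith),
        Real.zero_rpow (show -α ≠ 0 by linarith)]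
    · have hts : (0:ℝ) < t - s := sub_pos.2 h
      have hpow : (t - s) * (t - s) ^ (-α) = (t - s) ^ (1 - α) := by
        rw [show (1:ℝ) - α = 1 + (-α) by ring, Real.rpow_add hts, Real.rpow_one]
      calc ‖G s‖ = |f t - f s| * (t - s) ^ (-α) := by
            rw [hG, Real.norm_eq_abs, abs_mul,
              abs_of_nonneg (Real.rpow_nonneg hts.le _)]
        _ ≤ (C * (t - s)) * (t - s) ^ (-α) :=
            mul_le_mul_of_nonneg_right (hlip s hs) (Real.rpow_nonneg hts.le _)
        _ = C * (t - s) ^ (1 - α) := by rw [← hpow]; ring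
  have hGcont : ContinuousOn G (Set.Icc a t) := by
    intro s hs
    rcases eq_or_lt_of_le hs.2 with h | h
    · rw [h]
      rw [ContinuousWithinAt, hGt]
      apply squeeze_zero_norm' (a := fun u => C * (t - u) ^ (1 - α))
      · filter_upwards [self_mem_nhdsWithin] with u hu using hGbound u hu
      · have h0 : Filter.Tendsto (fun u : ℝ => t - u) (nhdsWithin t (Set.Icc a t))
            (nhds 0) := by
          have h0' : Filter.Tendsto (fun u : ℝ => t - u) (nhds t) (nhds (t - t)) :=
            (continuous_const.sub continuous_id).continuousAt
          simpa [sub_self] using h0'.mono_left nhdsWithin_le_nhds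
        have h1 : Filter.Tendsto (fun u : ℝ => (t - u) ^ (1 - α))
            (nhdsWithin t (Set.Icc a t)) (nhds ((0:ℝ) ^ (1 - α))) :=
          (Real.continuousAt_rpow_const 0 (1 - α) (Or.inr (by linarith))).tendsto.comp h0
        rw [Real.zero_rpow (show (1:ℝ) - α ≠ 0 by linarith)] at h1
        simpa using h1.const_mul C
    · have hts : (0:ℝ) < t - s := sub_pos.2 h
      exact (continuousWithinAt_const.sub
          (((hfc s hs.1).mono (fun x hx => hx.1)))).mul
        ((continuousWithinAt_const.sub continuousWithinAt_id).rpow_const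
          (Or.inl hts.ne'))
  have hGderiv : ∀ s ∈ Set.Ioo a t,
      HasDerivAt G (-(deriv f s * (t - s) ^ (-α))
        + (f t - f s) * (α * (t - s) ^ (-α - 1))) s := by
    intro s hs
    have hts : (0:ℝ) < t - s := sub_pos.2 hs.2
    have hfd : HasDerivAt f (deriv f s) s :=
      ((hf.contDiffAt (Ici_mem_nhds hs.1)).differentiableAt one_ne_zero).hasDerivAt
    have h1 : HasDerivAt (fun u => f t - f u) (-(deriv f s)) s := by
      have := (hasDerivAt_const s (f t)).sub hfd
      rw [zero_sub] at this
      exact this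
    have hsub : HasDerivAt (fun u : ℝ => t - u) (-1) s := by
      have := (hasDerivAt_const s t).sub (hasDerivAt_id s)
      rw [zero_sub] at this
      exact this
    have h2 : HasDerivAt (fun u : ℝ => (t - u) ^ (-α)) (α * (t - s) ^ (-α - 1)) s := by
      have := (Real.hasDerivAt_rpow_const (x := t - s) (p := -α)
        (Or.inl hts.ne')).comp s hsub
      exact this.congr_deriv (by ring)
    have := h1.mul h2
    exact this.congr_deriv (by ring)
  have key : (∫ s in a..t, (-(deriv f s * (t - s) ^ (-α))
      + (f t - f s) * (α * (t - s) ^ (-α - 1)))) = G t - G a :=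
    integral_eq_sub_of_hasDerivAt_of_le ht.le hGcont hGderiv (I2.neg.add I3)
  have I2n : IntervalIntegrable (fun s => -(deriv f s * (t - s) ^ (-α))) volume a t :=
    I2.neg
  have key' : (∫ s in a..t, -(deriv f s * (t - s) ^ (-α)))
      + (∫ s in a..t, (f t - f s) * (α * (t - s) ^ (-α - 1)))
      = G t - G a := by
    rw [← integral_add I2n I3]; exact key
  rw [hGt, intervalIntegral.integral_neg] at key'
  have hGa : G a = (f t - f a) * (t - a) ^ (-α) := rfl
  rw [hGa] at key'
  have main : (∫ s in a..t, deriv f s * (t - s) ^ (-α))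
      = (f t - f a) * (t - a) ^ (-α)
        + ∫ s in a..t, (f t - f s) * (α * (t - s) ^ (-α - 1)) := by
    linarith [key']
  -- rewrite the integrals in the goal
  have E1 : (∫ s in a..t, deriv f s / (t - s) ^ α)
      = ∫ s in a..t, deriv f s * (t - s) ^ (-α) := by
    apply intervalIntegral.integral_congr
    intro s hs
    rw [uIcc_of_le ht.le] at hs
    show deriv f s / (t - s) ^ α = deriv f s * (t - s) ^ (-α)
    rw [Real.rpow_neg (sub_nonneg.2 hs.2), div_eq_mul_inv]
  have E2 : (∫ s in a..t, (f t - f s) * (α * (t - s) ^ (-α - 1)))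
      = α * ∫ s in a..t, (f t - f s) / (t - s) ^ (1 + α) := by
    rw [← intervalIntegral.integral_const_mul]
    apply intervalIntegral.integral_congr
    intro s hs
    rw [uIcc_of_le ht.le] at hs
    show (f t - f s) * (α * (t - s) ^ (-α - 1)) = α * ((f t - f s) / (t - s) ^ (1 + α))
    rw [show (-α - 1 : ℝ) = -(1 + α) by ring,
      Real.rpow_neg (sub_nonneg.2 hs.2), div_eq_mul_inv]
    ring
  rw [E1, main, E2, Real.rpow_neg hta.le]
  ring
end

section
/- If f : ℝ → ℝ is C¹ on [a,∞), t > a, and f is extended by setting f(s) = f(a) for all s < a, then the classical Caputo derivative (1/Γ(1-α)) ∫_a^t f'(s)/(t-s)^α ds equals the one-sided nonlocal derivative (α/Γ(1-α)) ∫_{-∞}^t (f(t)-f(s))/(t-s)^{1+α} ds. -/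
open Set MeasureTheory intervalIntegral

open Filter Topology

set_option maxHeartbeats 1000000


lemma measEmb_reflect (c : ℝ) : MeasurableEmbedding (fun x : ℝ => c - x) := by
  have h : (fun x : ℝ => c + -x) = fun x : ℝ => c - x := by funext x; ring
  rw [← h]
  exact ((Homeomorph.neg ℝ).trans (Homeomorph.addLeft c)).isClosedEmbedding.measurableEmbedding

lemma reflect_preimage (c a : ℝ) : (fun y : ℝ => c - y) ⁻¹' (Set.Iio a) = Set.Ioi (c - a) := by
  ext y
  simp only [Set.mem_preimage, Set.mem_Iio, Set.mem_Ioi]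
  constructor <;> intro h <;> linarith

lemma setIntegral_reflect (c : ℝ) (φ : ℝ → ℝ) (s : Set ℝ) :
    ∫ x in s, φ x = ∫ x in (fun y : ℝ => c - y) ⁻¹' s, φ (c - x) := by
  calc ∫ x in s, φ x
      = ∫ x in s, φ x ∂(Measure.map (fun y : ℝ => c - y) volume) := by
        rw [Measure.map_sub_left_eq_self]
    _ = ∫ x in (fun y : ℝ => c - y) ⁻¹' s, φ (c - x) := (measEmb_reflect c).setIntegral_map φ s

lemma integrableOn_reflect {c : ℝ} {φ : ℝ → ℝ} {s : Set ℝ}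
    (h : IntegrableOn (fun x => φ (c - x)) ((fun y : ℝ => c - y) ⁻¹' s)) :
    IntegrableOn φ s := by
  have h2 : IntegrableOn (φ ∘ fun x : ℝ => c - x) ((fun x : ℝ => c - x) ⁻¹' s) volume := h
  have h3 := ((measEmb_reflect c).integrableOn_map_iff (μ := volume) (f := φ) (s := s)).2 h2
  rwa [Measure.map_sub_left_eq_self] at h3

lemma kernel_Iio_integral {α a t : ℝ} (hα : 0 < α) (ht : a < t) :
    (∫ s in Set.Iio a, (t - s) ^ (-(1+α)) = (t - a) ^ (-α) / α) ∧
      IntegrableOn (fun s : ℝ => (t - s) ^ (-(1+α))) (Set.Iio a) := by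
  have hta : (0:ℝ) < t - a := by linarith
  have hexp : -(1+α) < -1 := by linarith
  have hint : IntegrableOn (fun x : ℝ => x ^ (-(1+α))) (Set.Ioi (t - a)) :=
    integrableOn_Ioi_rpow_of_lt hexp hta
  constructor
  · rw [setIntegral_reflect t _ (Set.Iio a), reflect_preimage]
    have heq : ∀ x ∈ Set.Ioi (t - a), (t - (t - x)) ^ (-(1+α)) = x ^ (-(1+α)) := by
      intro x _; rw [sub_sub_cancel]
    rw [setIntegral_congr_fun measurableSet_Ioi heq, integral_Ioi_rpow_of_lt hexp hta]
    rw [show -(1+α) + 1 = -α by ring]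
    rw [neg_div, div_neg, neg_neg]
  · apply integrableOn_reflect (c := t)
    rw [reflect_preimage]
    apply hint.congr_fun _ measurableSet_Ioi
    intro x _; simp only [sub_sub_cancel]

/-- For a `C¹` function on `[a,∞)` extended by the constant `f a` for `s < a`,
the classical Caputo derivative based at `a` equals the one-sided nonlocal derivative. -/
theorem caputo_classical_eq_one_sided (α a t : ℝ) (hα : 0 < α) (hα1 : α < 1)
    (f : ℝ → ℝ) (hf : ContDiffOn ℝ 1 f (Set.Ici a))
    (hext : ∀ s < a, f s = f a) (ht : a < t) :
    (1 / Real.Gamma (1 - α)) * ∫ s in a..t, deriv f s / (t - s) ^ α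
      = caputo α f t := by
  have hta : (0:ℝ) < t - a := by linarith
  set g := derivWithin f (Set.Ici a) with hgdef
  have hU : UniqueDiffOn ℝ (Set.Ici a) := uniqueDiffOn_Ici a
  have hgc : ContinuousOn g (Set.Ici a) := hf.continuousOn_derivWithin hU le_rfl
  have hfc : ContinuousOn f (Set.Ici a) := hf.continuousOn
  have hfd : ∀ s ∈ Set.Ioi a, HasDerivAt f (g s) s := fun s hs =>
    ((hf.differentiableOn one_ne_zero s (mem_Ici.mpr (le_of_lt hs))).hasDerivWithinAt).hasDerivAt (Ici_mem_nhds hs)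
  -- Lipschitz-type bound
  obtain ⟨L, hL⟩ := IsCompact.exists_bound_of_continuousOn isCompact_Icc
    (hgc.mono (Icc_subset_Ici_self : Icc a t ⊆ Ici a))
  have hlip : ∀ s ∈ Set.Icc a t, |f t - f s| ≤ L * (t - s) := by
    intro s hs
    have h1 : ∀ x ∈ Set.Icc a t, HasDerivWithinAt f (g x) (Set.Icc a t) x := fun x hx =>
      ((hf.differentiableOn one_ne_zero x (mem_Ici.mpr hx.1)).hasDerivWithinAt).mono Icc_subset_Ici_self
    have h2 := (convex_Icc a t).norm_image_sub_le_of_norm_hasDerivWithin_le h1 hL hs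
      ⟨ht.le, le_refl t⟩
    rw [Real.norm_eq_abs, Real.norm_eq_abs, abs_of_nonneg (by linarith [hs.2] : (0:ℝ) ≤ t - s)]
      at h2
    exact h2
  have hL0 : 0 ≤ L := le_trans (norm_nonneg _) (hL a ⟨le_refl a, ht.le⟩)
  -- integrability of the weak kernel
  have hKα : IntervalIntegrable (fun s => (t - s) ^ (-α)) volume a t := by
    have h0 : IntervalIntegrable (fun x : ℝ => x ^ (-α)) volume (t - a) (t - t) :=
      intervalIntegrable_rpow' (by linarith)
    have h1 := h0.comp_sub_left t
    rwa [show t - (t - a) = a by ring, show t - (t - t) = t by ring] at h1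
  have hgK : IntervalIntegrable (fun s => g s * (t - s) ^ (-α)) volume a t :=
    hKα.continuousOn_mul (hgc.mono (by rw [uIcc_of_le ht.le]; exact Icc_subset_Ici_self))
  -- integrability of strong kernel against (f t - f ·)
  have hFK : IntervalIntegrable (fun s => (f t - f s) * (t - s) ^ (-(1+α))) volume a t := by
    rw [intervalIntegrable_iff_integrableOn_Ioc_of_le ht.le]
    have hae : IntegrableOn (fun s => (f t - f s) * (t - s) ^ (-(1+α))) (Set.Ioo a t) := by
      have hcont : ContinuousOn (fun s => (f t - f s) * (t - s) ^ (-(1+α))) (Set.Ioo a t) := by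
        apply ContinuousOn.mul
        · exact continuousOn_const.sub (hfc.mono (fun x hx => le_of_lt hx.1))
        · exact (continuousOn_const.sub continuousOn_id).rpow_const
            (fun x hx => Or.inl (by simp only [Pi.sub_apply, id]; intro h; nlinarith [hx.2]))
      have hdom : IntegrableOn (fun s => L * (t - s) ^ (-α)) (Set.Ioo a t) :=
        ((hKα.const_mul L).1.mono_set Set.Ioo_subset_Ioc_self)
      apply Integrable.mono hdom
        (hcont.aestronglyMeasurable measurableSet_Ioo)
      filter_upwards [ae_restrict_mem measurableSet_Ioo] with s hs
      have hts : (0:ℝ) < t - s := by linarith [hs.2]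
      rw [Real.norm_eq_abs, Real.norm_eq_abs, abs_mul]
      have h1 : |f t - f s| ≤ L * (t - s) := hlip s ⟨hs.1.le, hs.2.le⟩
      have h2 : |(t - s) ^ (-(1+α))| = (t - s) ^ (-(1+α)) :=
        abs_of_nonneg (Real.rpow_nonneg hts.le _)
      rw [h2]
      calc |f t - f s| * (t - s) ^ (-(1+α)) ≤ (L * (t - s)) * (t - s) ^ (-(1+α)) := by
            apply mul_le_mul_of_nonneg_right h1 (Real.rpow_nonneg hts.le _)
        _ = L * ((t - s) ^ (1:ℝ) * (t - s) ^ (-(1+α))) := by rw [Real.rpow_one]; ring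
        _ = L * (t - s) ^ (-α) := by
            rw [← Real.rpow_add hts, show (1:ℝ) + -(1+α) = -α by ring]
        _ ≤ |L * (t - s) ^ (-α)| := le_abs_self _
    exact hae.congr_set_ae (MeasureTheory.Ioo_ae_eq_Ioc (α := ℝ)).symm
  -- key integration by parts identity
  have key : (∫ s in a..t, g s * (t - s) ^ (-α))
      = α * (∫ s in a..t, (f t - f s) * (t - s) ^ (-(1+α))) + (f t - f a) * (t - a) ^ (-α) := by
    set h : ℝ → ℝ := fun s => α * ((f t - f s) * (t - s) ^ (-(1+α))) - g s * (t - s) ^ (-α)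
      with hh
    have hh_int : IntervalIntegrable h volume a t := (hFK.const_mul α).sub hgK
    set G : ℝ → ℝ := fun s => (f t - f s) * (t - s) ^ (-α) with hGdef
    set Φ : ℝ → ℝ := fun x => ∫ s in a..x, h s with hΦdef
    have hΦcont : ContinuousOn Φ (Set.uIcc a t) :=
      intervalIntegral.continuousOn_primitive_interval' hh_int left_mem_uIcc
    have hIcoIcc : Set.Ico a t ⊆ Set.uIcc a t := by
      rw [Set.uIcc_of_le ht.le]; exact Set.Ico_subset_Icc_self
    have hmem : t ∈ Set.uIcc a t := by rw [Set.uIcc_of_le ht.le]; exact ⟨ht.le, le_refl t⟩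
    have hT1 : Filter.Tendsto Φ (nhdsWithin t (Set.Ico a t)) (nhds (Φ t)) :=
      ((hΦcont t hmem).mono hIcoIcc).tendsto
    -- on Ico a t, Φ x = G x - G a
    have hΦeq : ∀ x ∈ Set.Ico a t, Φ x = G x - G a := by
      intro x hx
      have hax : a ≤ x := hx.1
      have hcontG : ContinuousOn G (Set.Icc a x) := by
        apply ContinuousOn.mul
        · exact continuousOn_const.sub (hfc.mono (fun y hy => hy.1))
        · apply (continuousOn_const.sub continuousOn_id).rpow_const
          intro y hy
          exact Or.inl (by simp only [Pi.sub_apply, id]; intro hc; nlinarith [hy.2, hx.2])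
      have hderiv : ∀ s ∈ Set.Ioo a x, HasDerivAt G (h s) s := by
        intro s hs
        have hts : (0:ℝ) < t - s := by nlinarith [hs.2, hx.2]
        have h1 : HasDerivAt (fun s => f t - f s) (-(g s)) s :=
          (hfd s hs.1).const_sub (f t)
        have h2 : HasDerivAt (fun s : ℝ => t - s) (-1) s := (hasDerivAt_id s).const_sub t
        have h3 := h2.rpow_const (p := -α) (Or.inl hts.ne')
        have h4 := h1.mul h3
        refine h4.congr_deriv ?_
        simp only [hh]
        rw [show -α - 1 = -(1+α) by ring]
        ring
      have hint : IntervalIntegrable h volume a x :=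
        hh_int.mono_set (by
          rw [Set.uIcc_of_le hax, Set.uIcc_of_le ht.le]
          exact Set.Icc_subset_Icc le_rfl hx.2.le)
      exact intervalIntegral.integral_eq_sub_of_hasDerivAt_of_le hax hcontG hderiv hint
    -- G tends to 0 at t from the left
    have hGlim : Filter.Tendsto G (nhdsWithin t (Set.Ico a t)) (nhds 0) := by
      have hbound : ∀ᶠ x in nhdsWithin t (Set.Ico a t), ‖G x‖ ≤ L * (t - x) ^ (1 - α) := by
        filter_upwards [self_mem_nhdsWithin] with x hx
        have hts : (0:ℝ) < t - x := by linarith [hx.2]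
        rw [Real.norm_eq_abs, abs_mul]
        have h2 : |(t - x) ^ (-α)| = (t - x) ^ (-α) := abs_of_nonneg (Real.rpow_nonneg hts.le _)
        rw [h2]
        calc |f t - f x| * (t - x) ^ (-α) ≤ (L * (t - x)) * (t - x) ^ (-α) :=
              mul_le_mul_of_nonneg_right (hlip x ⟨hx.1, hx.2.le⟩) (Real.rpow_nonneg hts.le _)
          _ = L * ((t - x) ^ (1:ℝ) * (t - x) ^ (-α)) := by rw [Real.rpow_one]; ring
          _ = L * (t - x) ^ (1 - α) := by
              rw [← Real.rpow_add hts, show (1:ℝ) + -α = 1 - α by ring]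
      have htend : Filter.Tendsto (fun x : ℝ => L * (t - x) ^ (1 - α))
          (nhdsWithin t (Set.Ico a t)) (nhds 0) := by
        have hc : Filter.Tendsto (fun x : ℝ => L * (t - x) ^ (1 - α)) (nhds t)
            (nhds (L * (0:ℝ) ^ (1 - α))) := by
          apply Filter.Tendsto.const_mul
          apply Filter.Tendsto.rpow_const
          · exact (continuous_const.sub continuous_id).tendsto' t 0 (by simp)
          · exact Or.inr (by linarith)
        rw [Real.zero_rpow (by intro hc0; linarith [hc0] : (1:ℝ) - α ≠ 0), mul_zero] at hc
        exact hc.mono_left nhdsWithin_le_nhds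
      exact squeeze_zero_norm' hbound htend
    have hT2 : Filter.Tendsto Φ (nhdsWithin t (Set.Ico a t)) (nhds (0 - G a)) := by
      apply Filter.Tendsto.congr' _ (hGlim.sub tendsto_const_nhds)
      filter_upwards [self_mem_nhdsWithin] with x hx
      exact (hΦeq x hx).symm
    haveI : (nhdsWithin t (Set.Ico a t)).NeBot := by
      rw [← mem_closure_iff_nhdsWithin_neBot, closure_Ico ht.ne]
      exact ⟨ht.le, le_refl t⟩
    have hΦt : Φ t = 0 - G a := tendsto_nhds_unique hT1 hT2
    have hsplit : Φ t = α * (∫ s in a..t, (f t - f s) * (t - s) ^ (-(1+α)))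
        - ∫ s in a..t, g s * (t - s) ^ (-α) := by
      simp only [hΦdef, hh]
      rw [intervalIntegral.integral_sub (hFK.const_mul α) hgK,
        intervalIntegral.integral_const_mul]
    rw [hsplit] at hΦt
    have hGa : G a = (f t - f a) * (t - a) ^ (-α) := rfl
    rw [hGa] at hΦt
    linarith [hΦt]
  -- rewrite the classical side
  have hLHS : (∫ s in a..t, deriv f s / (t - s) ^ α)
      = ∫ s in a..t, g s * (t - s) ^ (-α) := by
    apply intervalIntegral.integral_congr_ae
    apply Filter.Eventually.of_forall
    intro s hs
    rw [Set.uIoc_of_le ht.le] at hs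
    have hst : (0:ℝ) ≤ t - s := by linarith [hs.2]
    rw [(hfd s hs.1).deriv, div_eq_mul_inv, ← Real.rpow_neg hst]
  -- the Iio a part
  obtain ⟨hIio_val, hIio_int⟩ := kernel_Iio_integral hα ht
  have hIio_eq : (∫ s in Set.Iio a, (f t - f s) / (t - s) ^ (1 + α))
      = (f t - f a) * ((t - a) ^ (-α) / α) := by
    have heq : ∀ s ∈ Set.Iio a, (f t - f s) / (t - s) ^ (1 + α)
        = (f t - f a) * (t - s) ^ (-(1+α)) := by
      intro s hs
      have hts : (0:ℝ) ≤ t - s := by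
        have : s < a := hs
        linarith
      rw [hext s hs, div_eq_mul_inv, ← Real.rpow_neg hts]
    rw [setIntegral_congr_fun measurableSet_Iio heq, MeasureTheory.integral_const_mul, hIio_val]
  have hIioF_int : IntegrableOn (fun s => (f t - f s) / (t - s) ^ (1 + α)) (Set.Iio a) := by
    apply MeasureTheory.IntegrableOn.congr_fun (hIio_int.const_mul (f t - f a)) _
      measurableSet_Iio
    intro s hs
    have hts : (0:ℝ) ≤ t - s := by
      have hsa : s < a := hs
      linarith
    show (f t - f a) * (t - s) ^ (-(1+α)) = (f t - f s) / (t - s) ^ (1 + α)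
    rw [hext s hs, div_eq_mul_inv, ← Real.rpow_neg hts]
  have hIcoF_int : IntegrableOn (fun s => (f t - f s) / (t - s) ^ (1 + α)) (Set.Ico a t) := by
    have h1 : IntegrableOn (fun s => (f t - f s) * (t - s) ^ (-(1+α))) (Set.Icc a t) :=
      (intervalIntegrable_iff_integrableOn_Icc_of_le ht.le).mp hFK
    apply MeasureTheory.IntegrableOn.congr_fun (h1.mono_set Set.Ico_subset_Icc_self) _
      measurableSet_Ico
    intro s hs
    show (f t - f s) * (t - s) ^ (-(1+α)) = (f t - f s) / (t - s) ^ (1 + α)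
    rw [div_eq_mul_inv, ← Real.rpow_neg (by linarith [hs.2] : (0:ℝ) ≤ t - s)]
  have hsplit : (∫ s in Set.Iio t, (f t - f s) / (t - s) ^ (1 + α))
      = (∫ s in Set.Iio a, (f t - f s) / (t - s) ^ (1 + α))
        + ∫ s in Set.Ico a t, (f t - f s) / (t - s) ^ (1 + α) := by
    have hdisj : Disjoint (Set.Iio a) (Set.Ico a t) := by
      apply Set.disjoint_left.mpr
      intro x hx hx2
      exact absurd hx2.1 (not_le.mpr hx)
    have hu := MeasureTheory.setIntegral_union (μ := volume)
      (f := fun s => (f t - f s) / (t - s) ^ (1 + α)) hdisj measurableSet_Ico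
      hIioF_int hIcoF_int
    rw [Set.Iio_union_Ico_eq_Iio ht.le] at hu
    exact hu
  have hIco_eq : (∫ s in Set.Ico a t, (f t - f s) / (t - s) ^ (1 + α))
      = ∫ s in a..t, (f t - f s) * (t - s) ^ (-(1+α)) := by
    rw [MeasureTheory.integral_Ico_eq_integral_Ioo, intervalIntegral.integral_of_le ht.le,
      MeasureTheory.integral_Ioc_eq_integral_Ioo]
    apply setIntegral_congr_fun measurableSet_Ioo
    intro s hs
    show (f t - f s) / (t - s) ^ (1 + α) = (f t - f s) * (t - s) ^ (-(1+α))
    rw [div_eq_mul_inv, ← Real.rpow_neg (by linarith [hs.2] : (0:ℝ) ≤ t - s)]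
  have hRHS : caputo α f t = (α / Real.Gamma (1 - α))
      * ((f t - f a) * ((t - a) ^ (-α) / α)
        + ∫ s in a..t, (f t - f s) * (t - s) ^ (-(1+α))) := by
    rw [caputo, hsplit, hIio_eq, hIco_eq]
  rw [hLHS, key, hRHS]
  have hΓ : Real.Gamma (1 - α) ≠ 0 := (Real.Gamma_pos_of_pos (by linarith)).ne'
  have hαne : α ≠ 0 := hα.ne'
  set I : ℝ := ∫ s in a..t, (f t - f s) * (t - s) ^ (-(1+α)) with hI
  set c1 : ℝ := f t - f a with hc1
  set c2 : ℝ := (t - a) ^ (-α) with hc2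
  field_simp
  ring
end

section
/- Let 0 < ν < α < 1 and define h : ℝ → ℝ by h(t) := max(|t|^ν - 1, 0) for t ≤ 0 (and h constant in time under the Caputo integral). Then for every t₁ ∈ [-1,0], the one-sided derivative satisfies 0 ≥ ∂ₜ^α h(t₁) ≥ -c where c = c(α,ν) > 0 is a constant depending only on α and ν that remains bounded as α → 1. -/
open Set MeasureTheory Filter

private lemma integrableOn_comp_neg_Iic {f : ℝ → ℝ} {c : ℝ}
    (hf : IntegrableOn f (Set.Ici (-c))) :
    IntegrableOn (fun x => f (-x)) (Set.Iic c) := by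
  have h_map : ((volume : Measure ℝ).restrict (Set.Ici (-c))).map Neg.neg
      = volume.restrict (Set.Iic c) := by
    conv => rhs; rw [← Measure.map_neg_eq_self (volume : Measure ℝ),
      measurableEmbedding_neg.restrict_map]
    simp
  rw [IntegrableOn, ← h_map, measurableEmbedding_neg.integrable_map_iff]
  have : ((fun x => f (-x)) ∘ Neg.neg) = f := by funext x; simp
  rw [this]
  exact hf

private lemma caputo_aux {ν α t₁ : ℝ} (hν : 0 < ν) (hνα : ν < α) (hα : α < 1)
    (ht₁ : t₁ ∈ Set.Icc (-1 : ℝ) 0) :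
    ∫ s in Set.Iio t₁, max (|s| ^ ν - 1) 0 / (t₁ - s) ^ (1 + α)
      ≤ 2 / (1 - α) + 4 / (α - ν) := by
  obtain ⟨ht₁l, ht₁u⟩ := ht₁
  have hα0 : 0 < α := hν.trans hνα
  set G1 : ℝ → ℝ := fun s => (t₁ - s) ^ (-α) with hG1def
  set G2 : ℝ → ℝ := fun s => 4 * (-s) ^ (ν - 1 - α) with hG2def
  -- integrability of the first comparison piece
  have hint1 : IntegrableOn G1 (Set.Ioo (-2) t₁) := by
    have h := (intervalIntegral.intervalIntegrable_rpow'
      (show (-1 : ℝ) < -α by linarith) (a := t₁ + 2) (b := 0)).comp_sub_left t₁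
    have h' : IntervalIntegrable G1 volume (-2) t₁ := by
      simpa [hG1def] using h
    rw [intervalIntegrable_iff, uIoc_of_le (by linarith : (-2 : ℝ) ≤ t₁)] at h'
    exact h'.mono_set Set.Ioo_subset_Ioc_self
  have hint1' : Integrable ((Set.Ioi (-2 : ℝ)).indicator G1)
      (volume.restrict (Set.Iio t₁)) := by
    rw [integrable_indicator_iff measurableSet_Ioi, IntegrableOn,
      Measure.restrict_restrict measurableSet_Ioi, Set.Ioi_inter_Iio]
    exact hint1
  -- integrability of the second comparison piece
  have hint2 : IntegrableOn G2 (Set.Iic (-2 : ℝ)) := by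
    have base : IntegrableOn (fun x : ℝ => x ^ (ν - 1 - α)) (Set.Ioi (2 : ℝ)) :=
      integrableOn_Ioi_rpow_of_lt (by linarith) (by norm_num)
    have base2 : IntegrableOn (fun x : ℝ => 4 * x ^ (ν - 1 - α)) (Set.Ici (2 : ℝ)) := by
      rw [integrableOn_Ici_iff_integrableOn_Ioi]
      exact base.const_mul 4
    have := integrableOn_comp_neg_Iic (c := (-2 : ℝ)) (by norm_num at base2 ⊢; exact base2)
    simpa [hG2def] using this
  have hint2' : Integrable ((Set.Iio (-2 : ℝ)).indicator G2)
      (volume.restrict (Set.Iio t₁)) := by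
    rw [integrable_indicator_iff measurableSet_Iio, IntegrableOn,
      Measure.restrict_restrict measurableSet_Iio,
      Set.inter_eq_self_of_subset_left (Set.Iio_subset_Iio (by linarith))]
    exact hint2.mono_set Set.Iio_subset_Iic_self
  set G : ℝ → ℝ := fun s =>
    (Set.Ioi (-2 : ℝ)).indicator G1 s + (Set.Iio (-2 : ℝ)).indicator G2 s with hGdef
  have hGint : Integrable G (volume.restrict (Set.Iio t₁)) := hint1'.add hint2'
  -- nonnegativity of the integrand
  have hg_nonneg : 0 ≤ᵐ[volume.restrict (Set.Iio t₁)]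
      fun s => max (|s| ^ ν - 1) 0 / (t₁ - s) ^ (1 + α) := by
    filter_upwards [ae_restrict_mem measurableSet_Iio] with s hs
    exact div_nonneg (le_max_right _ _)
      (Real.rpow_pos_of_pos (by simp only [Set.mem_Iio] at hs; linarith) _).le
  -- a.e. pointwise bound
  have hne : ∀ᵐ s ∂(volume.restrict (Set.Iio t₁)), s ≠ -2 := by
    refine ae_restrict_of_ae ?_
    rw [ae_iff]
    simp only [ne_eq, not_not, Set.setOf_eq_eq_singleton]
    exact measure_singleton _
  have hbound : (fun s => max (|s| ^ ν - 1) 0 / (t₁ - s) ^ (1 + α))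
      ≤ᵐ[volume.restrict (Set.Iio t₁)] G := by
    filter_upwards [ae_restrict_mem measurableSet_Iio, hne] with s hs hs2
    have hst : s < t₁ := hs
    have hts : 0 < t₁ - s := by linarith
    have hpow_pos : 0 < (t₁ - s) ^ (1 + α) := Real.rpow_pos_of_pos hts _
    have hs0 : s < 0 := lt_of_lt_of_le hst ht₁u
    have habs : |s| = -s := abs_of_neg hs0
    rcases lt_or_gt_of_ne hs2 with h2 | h2
    · -- s < -2
      have hGs : G s = G2 s := by
        rw [hGdef]
        simp only [Set.indicator_of_notMem (by simpa using h2.le : s ∉ Set.Ioi (-2 : ℝ)),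
          Set.indicator_of_mem (by simpa using h2 : s ∈ Set.Iio (-2 : ℝ)), zero_add]
      rw [hGs]
      have hnum : max (|s| ^ ν - 1) 0 ≤ (-s) ^ ν := by
        apply max_le _ (Real.rpow_nonneg (by linarith) _)
        rw [habs]; linarith [Real.rpow_nonneg (show (0:ℝ) ≤ -s by linarith) ν]
      have hden : (-s / 2) ^ (1 + α) ≤ (t₁ - s) ^ (1 + α) :=
        Real.rpow_le_rpow (by linarith) (by linarith) (by linarith)
      have hden_pos : 0 < (-s / 2) ^ (1 + α) :=
        Real.rpow_pos_of_pos (by linarith) _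
      have step1 : max (|s| ^ ν - 1) 0 / (t₁ - s) ^ (1 + α)
          ≤ (-s) ^ ν / (-s / 2) ^ (1 + α) :=
        div_le_div₀ (Real.rpow_nonneg (by linarith) _) hnum hden_pos hden
      have step2 : (-s) ^ ν / (-s / 2) ^ (1 + α)
          = 2 ^ (1 + α) * (-s) ^ (ν - 1 - α) := by
        rw [Real.div_rpow (by linarith : (0:ℝ) ≤ -s) (by norm_num : (0:ℝ) ≤ 2)]
        rw [div_div_eq_mul_div, mul_comm, mul_div_assoc]
        congr 1
        rw [← Real.rpow_sub (by linarith : (0:ℝ) < -s)]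
        congr 1; ring
      have h4 : (2 : ℝ) ^ (1 + α) ≤ 4 := by
        have : (2 : ℝ) ^ (1 + α) ≤ 2 ^ (2 : ℝ) :=
          Real.rpow_le_rpow_of_exponent_le one_le_two (by linarith)
        have h22 : (2 : ℝ) ^ (2 : ℝ) = 4 := by
          rw [show (2 : ℝ) ^ (2:ℝ) = (2:ℝ) ^ ((2:ℕ):ℝ) by norm_num, Real.rpow_natCast]
          norm_num
        linarith
      calc max (|s| ^ ν - 1) 0 / (t₁ - s) ^ (1 + α)
          ≤ 2 ^ (1 + α) * (-s) ^ (ν - 1 - α) := by rw [← step2]; exact step1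
        _ ≤ 4 * (-s) ^ (ν - 1 - α) :=
            mul_le_mul_of_nonneg_right h4 (Real.rpow_nonneg (by linarith) _)
        _ = G2 s := rfl
    · -- -2 < s
      have hGs : G1 s ≤ G s := by
        rw [hGdef]
        simp only [Set.indicator_of_mem (by simpa using h2 : s ∈ Set.Ioi (-2 : ℝ))]
        have : 0 ≤ (Set.Iio (-2 : ℝ)).indicator G2 s := by
          apply Set.indicator_nonneg
          intro x hx
          simp only [Set.mem_Iio] at hx
          exact mul_nonneg (by norm_num) (Real.rpow_nonneg (by linarith) _)
        linarith
      refine le_trans ?_ hGs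
      have hnum : max (|s| ^ ν - 1) 0 ≤ t₁ - s := by
        apply max_le _ hts.le
        rcases le_or_gt |s| 1 with h | h
        · have : |s| ^ ν ≤ 1 := Real.rpow_le_one (abs_nonneg s) h hν.le
          linarith
        · have h1 : |s| ^ ν ≤ |s| ^ (1 : ℝ) :=
            Real.rpow_le_rpow_of_exponent_le h.le (by linarith)
          rw [Real.rpow_one] at h1
          linarith
      have key : (t₁ - s) / (t₁ - s) ^ (1 + α) = (t₁ - s) ^ (-α) := by
        rw [Real.rpow_add hts, Real.rpow_one, Real.rpow_neg hts.le,
          div_mul_eq_div_div, div_self hts.ne', one_div]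
      calc max (|s| ^ ν - 1) 0 / (t₁ - s) ^ (1 + α)
          ≤ (t₁ - s) / (t₁ - s) ^ (1 + α) := by gcongr
        _ = G1 s := key
  -- comparison
  have hmain : ∫ s in Set.Iio t₁, max (|s| ^ ν - 1) 0 / (t₁ - s) ^ (1 + α)
      ≤ ∫ s in Set.Iio t₁, G s :=
    integral_mono_of_nonneg hg_nonneg hGint hbound
  -- compute / bound the comparison integral
  have hsplit : ∫ s in Set.Iio t₁, G s
      = (∫ s in Set.Iio t₁, (Set.Ioi (-2 : ℝ)).indicator G1 s)
        + ∫ s in Set.Iio t₁, (Set.Iio (-2 : ℝ)).indicator G2 s :=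
    integral_add hint1' hint2'
  have hI1 : ∫ s in Set.Iio t₁, (Set.Ioi (-2 : ℝ)).indicator G1 s ≤ 2 / (1 - α) := by
    rw [integral_indicator measurableSet_Ioi,
      Measure.restrict_restrict measurableSet_Ioi, Set.Ioi_inter_Iio]
    have hval : ∫ s in Set.Ioo (-2 : ℝ) t₁, G1 s = (t₁ + 2) ^ (1 - α) / (1 - α) := by
      rw [← integral_Ioc_eq_integral_Ioo,
        ← intervalIntegral.integral_of_le (by linarith : (-2 : ℝ) ≤ t₁)]
      rw [hG1def]
      rw [intervalIntegral.integral_comp_sub_left (fun x : ℝ => x ^ (-α)) t₁]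
      simp only [sub_self, sub_neg_eq_add]
      rw [integral_rpow (Or.inl (by linarith : (-1 : ℝ) < -α))]
      rw [Real.zero_rpow (by intro h; rw [neg_add_eq_sub] at h; linarith [sub_eq_zero.mp h])]
      rw [neg_add_eq_sub, sub_zero]
    rw [hval]
    have hnum2 : (t₁ + 2) ^ (1 - α) ≤ 2 := by
      have h1 : (t₁ + 2) ^ (1 - α) ≤ 2 ^ (1 - α) :=
        Real.rpow_le_rpow (by linarith) (by linarith) (by linarith)
      have h2 : (2 : ℝ) ^ (1 - α) ≤ 2 ^ (1 : ℝ) :=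
        Real.rpow_le_rpow_of_exponent_le one_le_two (by linarith)
      rw [Real.rpow_one] at h2
      linarith
    gcongr
  have hI2 : ∫ s in Set.Iio t₁, (Set.Iio (-2 : ℝ)).indicator G2 s ≤ 4 / (α - ν) := by
    rw [integral_indicator measurableSet_Iio,
      Measure.restrict_restrict measurableSet_Iio,
      Set.inter_eq_self_of_subset_left (Set.Iio_subset_Iio (by linarith))]
    rw [← integral_Iic_eq_integral_Iio]
    have hcomp : ∫ s in Set.Iic (-2 : ℝ), G2 s
        = ∫ x in Set.Ioi (2 : ℝ), 4 * x ^ (ν - 1 - α) := by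
      have := integral_comp_neg_Iic (-2 : ℝ) (fun x : ℝ => 4 * x ^ (ν - 1 - α))
      rw [neg_neg] at this
      exact this
    rw [hcomp, integral_const_mul,
      integral_Ioi_rpow_of_lt (by linarith : ν - 1 - α < -1) (by norm_num : (0:ℝ) < 2)]
    rw [show ν - 1 - α + 1 = ν - α by ring]
    have hle1 : (2 : ℝ) ^ (ν - α) ≤ 1 :=
      Real.rpow_le_one_of_one_le_of_nonpos one_le_two (by linarith)
    have hpos : 0 < (2 : ℝ) ^ (ν - α) := Real.rpow_pos_of_pos (by norm_num) _
    have heq : -(2 : ℝ) ^ (ν - α) / (ν - α) = (2 : ℝ) ^ (ν - α) / (α - ν) := by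
      rw [show ν - α = -(α - ν) by ring, div_neg, neg_div, neg_neg]
    rw [heq]
    have : (2 : ℝ) ^ (ν - α) / (α - ν) ≤ 1 / (α - ν) := by
      gcongr
    calc 4 * ((2 : ℝ) ^ (ν - α) / (α - ν)) ≤ 4 * (1 / (α - ν)) := by gcongr
      _ = 4 / (α - ν) := by ring
  calc ∫ s in Set.Iio t₁, max (|s| ^ ν - 1) 0 / (t₁ - s) ^ (1 + α)
      ≤ ∫ s in Set.Iio t₁, G s := hmain
    _ = _ + _ := hsplit
    _ ≤ 2 / (1 - α) + 4 / (α - ν) := add_le_add hI1 hI2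

/-- For `0 < ν < α < 1` and `h(t) = max(|t|^ν - 1, 0)`, the one-sided Caputo
derivative of `h` at any `t₁ ∈ [-1,0]` satisfies `0 ≥ ∂ₜ^α h(t₁) ≥ -c(α,ν)`,
with a constant `c(α,ν) > 0` that remains bounded as `α → 1`. -/
theorem caputo_barrier_bound (ν : ℝ) (hν : 0 < ν) :
    ∃ c : ℝ → ℝ,
      (∀ α : ℝ, ν < α → α < 1 → 0 < c α ∧
        ∀ t₁ ∈ Set.Icc (-1 : ℝ) 0,
          caputo α (fun t => max (|t| ^ ν - 1) 0) t₁ ≤ 0 ∧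
          -(c α) ≤ caputo α (fun t => max (|t| ^ ν - 1) 0) t₁) ∧
      ∃ M : ℝ, ∀ᶠ α in nhdsWithin (1 : ℝ) (Set.Iio 1), c α ≤ M := by
  refine ⟨fun α => if ν < α ∧ α < 1 then
      (α / Real.Gamma (1 - α)) * (2 / (1 - α) + 4 / (α - ν)) else 1, ?_, ?_⟩
  · intro α hνα hα1
    dsimp only
    have hα0 : 0 < α := hν.trans hνα
    have hΓ : 0 < Real.Gamma (1 - α) := Real.Gamma_pos_of_pos (by linarith)
    have hC : 0 < α / Real.Gamma (1 - α) := div_pos hα0 hΓ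
    have hB : 0 < 2 / (1 - α) + 4 / (α - ν) :=
      add_pos (div_pos two_pos (by linarith)) (div_pos (by norm_num) (by linarith))
    rw [if_pos ⟨hνα, hα1⟩]
    refine ⟨mul_pos hC hB, ?_⟩
    intro t₁ ht₁
    have h0 : max (|t₁| ^ ν - 1) 0 = 0 := by
      apply max_eq_right
      have : |t₁| ≤ 1 := abs_le.mpr ⟨ht₁.1, le_trans ht₁.2 zero_le_one⟩
      linarith [Real.rpow_le_one (abs_nonneg t₁) this hν.le]
    have hrw : caputo α (fun t => max (|t| ^ ν - 1) 0) t₁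
        = (α / Real.Gamma (1 - α)) *
          -∫ s in Set.Iio t₁, max (|s| ^ ν - 1) 0 / (t₁ - s) ^ (1 + α) := by
      simp only [caputo, h0, zero_sub, neg_div, integral_neg]
    have hI0 : 0 ≤ ∫ s in Set.Iio t₁, max (|s| ^ ν - 1) 0 / (t₁ - s) ^ (1 + α) := by
      apply setIntegral_nonneg measurableSet_Iio
      intro s hs
      exact div_nonneg (le_max_right _ _)
        (Real.rpow_pos_of_pos (by simp only [Set.mem_Iio] at hs; linarith) _).le
    have hIle := caputo_aux hν hνα hα1 ht₁
    constructor
    · rw [hrw]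
      exact mul_nonpos_iff.mpr (Or.inl ⟨hC.le, neg_nonpos.mpr hI0⟩)
    · rw [hrw, mul_neg]
      exact neg_le_neg (mul_le_mul_of_nonneg_left hIle hC.le)
  · by_cases hν1 : ν < 1
    · refine ⟨3, ?_⟩
      set f : ℝ → ℝ := fun α =>
        2 * α / Real.Gamma (2 - α) + 4 * α * (1 - α) / ((α - ν) * Real.Gamma (2 - α))
        with hfdef
      have hΓcont : ContinuousAt (fun α : ℝ => Real.Gamma (2 - α)) 1 := by
        have hd : DifferentiableAt ℝ Real.Gamma ((fun α : ℝ => 2 - α) 1) := by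
          apply Real.differentiableAt_Gamma
          intro m
          have : (0 : ℝ) ≤ m := Nat.cast_nonneg m
          intro h
          simp only at h
          linarith [h]
        exact hd.continuousAt.comp ((continuous_const.sub continuous_id).continuousAt)
      have hΓ1 : Real.Gamma ((2 : ℝ) - 1) = 1 := by norm_num [Real.Gamma_one]
      have hcont : ContinuousAt f 1 := by
        apply ContinuousAt.add
        · exact ((continuous_const.mul continuous_id).continuousAt).div hΓcont
            (by rw [hΓ1]; norm_num)
        · exact (((continuous_const.mul continuous_id).mul
            (continuous_const.sub continuous_id)).continuousAt).div
            (((continuous_id.sub continuous_const).continuousAt).mul hΓcont)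
            (by rw [hΓ1, mul_one]; intro h; rw [sub_eq_zero] at h; linarith)
      have hf1 : f 1 = 2 := by
        rw [hfdef]
        simp only
        rw [hΓ1]
        norm_num
      have htend : Tendsto f (nhdsWithin (1 : ℝ) (Set.Iio 1)) (nhds 2) :=
        (hf1 ▸ hcont.tendsto).mono_left nhdsWithin_le_nhds
      have hev : ∀ᶠ α in nhdsWithin (1 : ℝ) (Set.Iio 1), f α ≤ 3 :=
        htend.eventually (eventually_le_nhds (by norm_num))
      have hmem1 : ∀ᶠ α in nhdsWithin (1 : ℝ) (Set.Iio 1), ν < α :=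
        (eventually_gt_nhds hν1).filter_mono nhdsWithin_le_nhds
      have hmem2 : ∀ᶠ α in nhdsWithin (1 : ℝ) (Set.Iio 1), α ∈ Set.Iio 1 :=
        eventually_mem_nhdsWithin
      have hmem0 : ∀ᶠ α in nhdsWithin (1 : ℝ) (Set.Iio 1), 0 < α :=
        (eventually_gt_nhds zero_lt_one).filter_mono nhdsWithin_le_nhds
      filter_upwards [hev, hmem1, hmem2, hmem0] with α h3 hνα hα1 hα0
      rw [if_pos ⟨hνα, hα1⟩]
      have hα1' : α < 1 := hα1
      have hΓ : 0 < Real.Gamma (1 - α) := Real.Gamma_pos_of_pos (by linarith)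
      have hG : Real.Gamma (2 - α) = (1 - α) * Real.Gamma (1 - α) := by
        rw [show (2 : ℝ) - α = (1 - α) + 1 by ring,
          Real.Gamma_add_one (by intro h; rw [sub_eq_zero] at h; linarith)]
      have heq : α / Real.Gamma (1 - α) * (2 / (1 - α) + 4 / (α - ν)) = f α := by
        rw [hfdef]
        simp only
        rw [hG]
        have h1 : (1 : ℝ) - α ≠ 0 := by intro h; rw [sub_eq_zero] at h; linarith
        have h2 : α - ν ≠ 0 := by intro h; rw [sub_eq_zero] at h; linarith
        field_simp
      rw [heq]
      exact h3
    · refine ⟨1, ?_⟩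
      filter_upwards [eventually_mem_nhdsWithin] with α hα
      rw [if_neg]
      · rintro ⟨h1, h2⟩
        have := not_lt.mp hν1
        simp only [Set.mem_Iio] at hα
        linarith
end

section
/- For 0 < ν < α < 1, the Caputo-type derivative of h(t) = max(|t|^ν - 1, 0) evaluated at t = -1 satisfies ∂ₜ^α h(-1) = (1/Γ(1-α)) ∫_{-∞}^{-1} (-ν |s|^{ν-1})/(-1-s)^α ds, and this quantity converges to -ν as α → 1 (with ν fixed). -/
open Set MeasureTheory Filter

/-- The integral expression `(1/Γ(1-α)) ∫_{-∞}^{-1} (-ν|s|^{ν-1})/(-1-s)^α ds`. -/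
noncomputable def barrierDeriv (α ν : ℝ) : ℝ :=
  (1 / Real.Gamma (1 - α)) * ∫ s in Set.Iio (-1 : ℝ), (-ν * |s| ^ (ν - 1)) / (-1 - s) ^ α

open Topology


lemma intOn_base (γ : ℝ) (hγ : γ < 1) : IntegrableOn (fun x : ℝ => (x-1) ^ (-γ)) (Ioc 1 2) := by
  have h := (intervalIntegral.intervalIntegrable_rpow' (a := 0) (b := 1) (by linarith : (-1:ℝ) < -γ)).comp_sub_right 1
  rw [intervalIntegrable_iff_integrableOn_Ioc_of_le (by norm_num)] at h
  norm_num at h; exact h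

lemma int_base_val (γ : ℝ) (hγ : γ < 1) : ∫ x in Ioc (1:ℝ) 2, (x-1) ^ (-γ) = 1/(1-γ) := by
  rw [← intervalIntegral.integral_of_le (by norm_num : (1:ℝ) ≤ 2)]
  rw [intervalIntegral.integral_comp_sub_right (fun t => t ^ (-γ)) 1]
  norm_num
  rw [integral_rpow (Or.inl (by linarith))]
  rw [Real.zero_rpow (by intro h; linarith), Real.one_rpow]
  rw [eq_comm, inv_eq_one_div]; rw [div_eq_div_iff (by linarith) (by linarith)]; ring

lemma contOn_A (p γ : ℝ) (s : Set ℝ) (hs : s ⊆ Ioi 1) :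
    ContinuousOn (fun x : ℝ => x ^ p * (x-1) ^ (-γ)) s := by
  apply ContinuousOn.mul
  · exact continuousOn_id.rpow_const fun x hx => Or.inl (by have := hs hx; simp only [mem_Ioi] at this; intro h; simp only [id] at h; linarith)
  · exact (continuousOn_id.sub continuousOn_const).rpow_const fun x hx =>
      Or.inl (by have := hs hx; simp only [mem_Ioi] at this; simp only [Pi.sub_apply, id]; intro h; rw [sub_eq_zero] at h; linarith)

lemma contOn_B (ν γ : ℝ) (s : Set ℝ) (hs : s ⊆ Ioi 1) :
    ContinuousOn (fun x : ℝ => (x ^ ν - 1) * (x-1) ^ (-γ)) s := by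
  apply ContinuousOn.mul
  · exact ContinuousOn.sub (continuousOn_id.rpow_const fun x hx => Or.inl (by have := hs hx; simp only [mem_Ioi] at this; intro h; simp only [id] at h; linarith)) continuousOn_const
  · exact (continuousOn_id.sub continuousOn_const).rpow_const fun x hx =>
      Or.inl (by have := hs hx; simp only [mem_Ioi] at this; simp only [Pi.sub_apply, id]; intro h; rw [sub_eq_zero] at h; linarith)

lemma intOn_A_Ioc (ν γ : ℝ) (hν0 : 0 < ν) (hν1 : ν ≤ 1) (hγ : γ < 1) :
    IntegrableOn (fun x : ℝ => x ^ (ν-1) * (x-1) ^ (-γ)) (Ioc 1 2) := by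
  apply Integrable.mono' (intOn_base γ hγ)
    ((contOn_A (ν-1) γ _ Ioc_subset_Ioi_self).aestronglyMeasurable measurableSet_Ioc)
  rw [ae_restrict_iff' measurableSet_Ioc]
  filter_upwards with x hx
  have h1 : (1:ℝ) < x := hx.1
  rw [Real.norm_eq_abs, abs_of_nonneg (mul_nonneg (Real.rpow_nonneg (by linarith) _) (Real.rpow_nonneg (by linarith) _))]
  exact mul_le_of_le_one_left (Real.rpow_nonneg (by linarith) _)
    (Real.rpow_le_one_of_one_le_of_nonpos h1.le (by linarith))

lemma bound_shift (x γ : ℝ) (hx : 2 < x) (hγ : 0 ≤ γ) : (x-1) ^ (-γ) ≤ 2 ^ γ * x ^ (-γ) := by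
  have h1 : (x/2 : ℝ) ^ (-γ) = 2 ^ γ * x ^ (-γ) := by
    rw [Real.div_rpow (by linarith) (by norm_num), Real.rpow_neg (by norm_num : (0:ℝ) ≤ 2), div_eq_mul_inv, inv_inv]
    ring
  rw [← h1]
  exact Real.rpow_le_rpow_of_nonpos (by linarith) (by linarith) (by linarith)

lemma intOn_A_Ioi2 (ν γ : ℝ) (hν0 : 0 < ν) (hνγ : ν < γ) :
    IntegrableOn (fun x : ℝ => x ^ (ν-1) * (x-1) ^ (-γ)) (Ioi 2) := by
  apply Integrable.mono'
    ((integrableOn_Ioi_rpow_of_lt (by linarith : ν-1-γ < -1) (by norm_num : (0:ℝ) < 2)).const_mul ((2:ℝ)^γ))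
    ((contOn_A (ν-1) γ (Ioi 2) (fun x hx => lt_trans (by norm_num : (1:ℝ) < 2) hx)).aestronglyMeasurable measurableSet_Ioi)
  rw [ae_restrict_iff' measurableSet_Ioi]
  filter_upwards with x hx
  have h2 : (2:ℝ) < x := hx
  rw [Real.norm_eq_abs, abs_of_nonneg (mul_nonneg (Real.rpow_nonneg (by linarith) _) (Real.rpow_nonneg (by linarith) _))]
  calc x ^ (ν-1) * (x-1) ^ (-γ) ≤ x ^ (ν-1) * (2^γ * x ^ (-γ)) :=
        mul_le_mul_of_nonneg_left (bound_shift x γ h2 (by linarith)) (Real.rpow_nonneg (by linarith) _)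
    _ = 2^γ * x ^ (ν-1-γ) := by
        rw [show ν-1-γ = (ν-1) + (-γ) by ring, Real.rpow_add (by linarith : (0:ℝ) < x)]; ring

lemma intOn_B_Ioc (ν γ : ℝ) (hν0 : 0 < ν) (hν1 : ν ≤ 1) (hγ0 : 0 ≤ γ) (hγ : γ < 1) :
    IntegrableOn (fun x : ℝ => (x ^ ν - 1) * (x-1) ^ (-γ-1)) (Ioi 1 ∩ Iic 2) := by
  rw [show Ioi (1:ℝ) ∩ Iic 2 = Ioc 1 2 from rfl]
  apply Integrable.mono' (intOn_base γ hγ)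
    ((contOn_B ν (γ+1) _ Ioc_subset_Ioi_self).congr (fun x _ => by rw [show -(γ+1) = -γ-1 by ring])
      |>.aestronglyMeasurable measurableSet_Ioc)
  rw [ae_restrict_iff' measurableSet_Ioc]
  filter_upwards with x hx
  have h1 : (1:ℝ) < x := hx.1
  have hb : (0:ℝ) < x - 1 := by linarith
  have hx0 : (0:ℝ) ≤ x ^ ν - 1 := by
    have := Real.rpow_le_rpow_of_exponent_le h1.le hν0.le
    rw [Real.rpow_zero] at this; linarith
  rw [Real.norm_eq_abs, abs_of_nonneg (mul_nonneg hx0 (Real.rpow_nonneg hb.le _))]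
  have hxν : x ^ ν - 1 ≤ x - 1 := by
    have := Real.rpow_le_rpow_of_exponent_le h1.le hν1
    rw [Real.rpow_one] at this; linarith
  calc (x ^ ν - 1) * (x-1) ^ (-γ-1) ≤ (x-1) * (x-1) ^ (-γ-1) :=
        mul_le_mul_of_nonneg_right hxν (Real.rpow_nonneg hb.le _)
    _ = (x-1) ^ (-γ) := by
        rw [show (x-1) * (x-1) ^ (-γ-1) = (x-1) ^ (1:ℝ) * (x-1) ^ (-γ-1) by rw [Real.rpow_one],
          ← Real.rpow_add hb, show (1:ℝ) + (-γ-1) = -γ by ring]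

lemma intOn_B_Ioi2 (ν γ : ℝ) (hν0 : 0 < ν) (hνγ : ν < γ) (hγ0 : 0 ≤ γ) :
    IntegrableOn (fun x : ℝ => (x ^ ν - 1) * (x-1) ^ (-γ-1)) (Ioi 2) := by
  apply Integrable.mono'
    ((integrableOn_Ioi_rpow_of_lt (by linarith : ν-1-γ < -1) (by norm_num : (0:ℝ) < 2)).const_mul ((2:ℝ)^(γ+1)))
    (((contOn_B ν (γ+1) (Ioi 2) (fun x hx => lt_trans (by norm_num : (1:ℝ) < 2) hx)).congr
      (fun x _ => by rw [show -(γ+1) = -γ-1 by ring])).aestronglyMeasurable measurableSet_Ioi)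
  rw [ae_restrict_iff' measurableSet_Ioi]
  filter_upwards with x hx
  have h2 : (2:ℝ) < x := hx
  have hb : (0:ℝ) < x - 1 := by linarith
  have hx0 : (0:ℝ) ≤ x ^ ν - 1 := by
    have := Real.rpow_le_rpow_of_exponent_le (by linarith : (1:ℝ) ≤ x) hν0.le
    rw [Real.rpow_zero] at this; linarith
  rw [Real.norm_eq_abs, abs_of_nonneg (mul_nonneg hx0 (Real.rpow_nonneg hb.le _))]
  calc (x ^ ν - 1) * (x-1) ^ (-γ-1) ≤ x ^ ν * (2^(γ+1) * x ^ (-(γ+1))) := by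
        apply mul_le_mul (by linarith [Real.rpow_nonneg (by linarith : (0:ℝ) ≤ x) ν])
          (by rw [show -γ-1 = -(γ+1) by ring]; exact bound_shift x (γ+1) h2 (by linarith))
          (Real.rpow_nonneg hb.le _) (Real.rpow_nonneg (by linarith) _)
    _ = 2^(γ+1) * x ^ (ν-1-γ) := by
        rw [show ν-1-γ = ν + (-(γ+1)) by ring, Real.rpow_add (by linarith : (0:ℝ) < x)]; ring

lemma intOn_A_Ioi (ν γ : ℝ) (hν0 : 0 < ν) (hν1 : ν ≤ 1) (hνγ : ν < γ) (hγ : γ < 1) :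
    IntegrableOn (fun x : ℝ => x ^ (ν-1) * (x-1) ^ (-γ)) (Ioi 1) := by
  rw [← Ioc_union_Ioi_eq_Ioi (by norm_num : (1:ℝ) ≤ 2)]
  exact (intOn_A_Ioc ν γ hν0 hν1 hγ).union (intOn_A_Ioi2 ν γ hν0 hνγ)

lemma intOn_B_Ioi (ν γ : ℝ) (hν0 : 0 < ν) (hν1 : ν ≤ 1) (hνγ : ν < γ) (hγ0 : 0 ≤ γ) (hγ : γ < 1) :
    IntegrableOn (fun x : ℝ => (x ^ ν - 1) * (x-1) ^ (-γ-1)) (Ioi 1) := by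
  rw [← Ioc_union_Ioi_eq_Ioi (by norm_num : (1:ℝ) ≤ 2)]
  exact (intOn_B_Ioc ν γ hν0 hν1 hγ0 hγ).union (intOn_B_Ioi2 ν γ hν0 hνγ hγ0)

lemma key_ibp (ν γ : ℝ) (hν0 : 0 < ν) (hν1 : ν ≤ 1) (hνγ : ν < γ) (hγ : γ < 1) :
    γ * ∫ x in Ioi (1:ℝ), (x ^ ν - 1) * (x-1) ^ (-γ-1)
      = ν * ∫ x in Ioi (1:ℝ), x ^ (ν-1) * (x-1) ^ (-γ) := by
  set F : ℝ → ℝ := fun x => (x ^ ν - 1) * (x-1) ^ (-γ) with hF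
  set F' : ℝ → ℝ := fun x =>
    ν * (x ^ (ν-1) * (x-1) ^ (-γ)) + (-γ) * ((x ^ ν - 1) * (x-1) ^ (-γ-1)) with hF'
  have hγ0 : (0:ℝ) ≤ γ := by linarith
  have intA := intOn_A_Ioi ν γ hν0 hν1 hνγ hγ
  have intB := intOn_B_Ioi ν γ hν0 hν1 hνγ hγ0 hγ
  have hF1 : F 1 = 0 := by simp [hF]
  have hderiv : ∀ x ∈ Ioi (1:ℝ), HasDerivAt F (F' x) x := by
    intro x hx
    have hx1 : (1:ℝ) < x := hx
    have d1 : HasDerivAt (fun y : ℝ => y ^ ν - 1) (ν * x ^ (ν-1)) x :=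
      (Real.hasDerivAt_rpow_const (Or.inl (by linarith))).sub_const 1
    have d2 : HasDerivAt (fun y : ℝ => (y-1) ^ (-γ)) (-γ * (x-1) ^ (-γ-1)) x := by
      have h := (Real.hasDerivAt_rpow_const (x := x-1) (p := -γ)
        (Or.inl (by intro h; rw [sub_eq_zero] at h; exact absurd h.symm hx1.ne))).comp x
        ((hasDerivAt_id x).sub_const 1)
      simpa [Function.comp_def] using h
    have := d1.mul d2
    convert this using 1
    · rfl
    · rfl
    show ν * (x ^ (ν-1) * (x-1) ^ (-γ)) + (-γ) * ((x ^ ν - 1) * (x-1) ^ (-γ-1)) = _; ring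
    rfl
  have hcont : ContinuousWithinAt F (Ici 1) 1 := by
    rw [ContinuousWithinAt, hF1]
    apply squeeze_zero_norm' (a := fun x => (x-1) ^ (1-γ))
    · filter_upwards [eventually_mem_nhdsWithin] with x hx
      have hx1 : (1:ℝ) ≤ x := hx
      rcases eq_or_lt_of_le hx1 with h | h
      · simp [hF, ← h, Real.rpow_nonneg]
      · have hb : (0:ℝ) < x - 1 := by linarith
        have hx0 : (0:ℝ) ≤ x ^ ν - 1 := by
          have := Real.rpow_le_rpow_of_exponent_le hx1 hν0.le
          rw [Real.rpow_zero] at this; linarith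
        rw [Real.norm_eq_abs, abs_of_nonneg (mul_nonneg hx0 (Real.rpow_nonneg hb.le _))]
        have hxν : x ^ ν - 1 ≤ x - 1 := by
          have := Real.rpow_le_rpow_of_exponent_le hx1 hν1
          rw [Real.rpow_one] at this; linarith
        calc (x ^ ν - 1) * (x-1) ^ (-γ) ≤ (x-1) * (x-1) ^ (-γ) :=
              mul_le_mul_of_nonneg_right hxν (Real.rpow_nonneg hb.le _)
          _ = (x-1) ^ (1-γ) := by
              rw [show (x-1) * (x-1) ^ (-γ) = (x-1) ^ (1:ℝ) * (x-1) ^ (-γ) by rw [Real.rpow_one],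
                ← Real.rpow_add hb, show (1:ℝ) + -γ = 1-γ by ring]
    · have hc : ContinuousAt (fun x : ℝ => (x-1) ^ (1-γ)) 1 := by
        apply ContinuousAt.rpow_const (by fun_prop) (Or.inr (by linarith))
      have := hc.tendsto.mono_left (nhdsWithin_le_nhds (s := Ici (1:ℝ)))
      simpa [Real.zero_rpow (show (1:ℝ)-γ ≠ 0 by intro hh; linarith)] using this
  have htop : Tendsto F atTop (𝓝 0) := by
    apply squeeze_zero_norm' (a := fun x => 2^γ * x ^ (ν-γ))
    · filter_upwards [eventually_gt_atTop (2:ℝ)] with x hx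
      have hb : (0:ℝ) < x - 1 := by linarith
      have hx0 : (0:ℝ) ≤ x ^ ν - 1 := by
        have := Real.rpow_le_rpow_of_exponent_le (by linarith : (1:ℝ) ≤ x) hν0.le
        rw [Real.rpow_zero] at this; linarith
      rw [Real.norm_eq_abs, abs_of_nonneg (mul_nonneg hx0 (Real.rpow_nonneg hb.le _))]
      calc (x ^ ν - 1) * (x-1) ^ (-γ) ≤ x ^ ν * (2^γ * x ^ (-γ)) := by
            apply mul_le_mul (by linarith [Real.rpow_nonneg (by linarith : (0:ℝ) ≤ x) ν])
              (bound_shift x γ hx hγ0) (Real.rpow_nonneg hb.le _) (Real.rpow_nonneg (by linarith) _)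
        _ = 2^γ * x ^ (ν-γ) := by
            rw [show ν-γ = ν + (-γ) by ring, Real.rpow_add (by linarith : (0:ℝ) < x)]; ring
    · have := (tendsto_rpow_neg_atTop (by linarith : (0:ℝ) < γ-ν)).const_mul ((2:ℝ)^γ)
      rw [mul_zero] at this
      simpa [show -(γ-ν) = ν-γ by ring] using this
  have hint : IntegrableOn F' (Ioi 1) := (intA.const_mul ν).add (intB.const_mul (-γ))
  have h0 : ∫ x in Ioi (1:ℝ), F' x = 0 - F 1 :=
    integral_Ioi_of_hasDerivAt_of_tendsto hcont hderiv hint htop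
  rw [hF1, sub_zero] at h0
  rw [hF', integral_add (intA.const_mul ν) (intB.const_mul (-γ)),
    integral_const_mul, integral_const_mul] at h0
  linarith


lemma trans_barrier (ν α : ℝ) (hν0 : 0 < ν) :
    ∫ s in Iio (-1:ℝ), (-ν * |s| ^ (ν-1)) / (-1 - s) ^ α
      = -ν * ∫ x in Ioi (1:ℝ), x ^ (ν-1) * (x-1) ^ (-α) := by
  set G : ℝ → ℝ := fun x => -ν * (x ^ (ν-1) * (x-1) ^ (-α)) with hG
  have step1 : ∫ s in Iio (-1:ℝ), (-ν * |s| ^ (ν-1)) / (-1 - s) ^ α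
      = ∫ s in Iio (-1:ℝ), G (-s) := by
    apply setIntegral_congr_fun measurableSet_Iio
    intro s hs
    have hs1 : s < -1 := hs
    dsimp only
    rw [div_eq_mul_inv, ← Real.rpow_neg (by linarith : (0:ℝ) ≤ -1-s), abs_of_neg (by linarith : s < 0)]
    simp only [hG]
    rw [show (-1 - s : ℝ) = -s - 1 by ring]
    ring
  rw [step1, ← integral_Iic_eq_integral_Iio]
  have := integral_comp_neg_Iic (-1 : ℝ) G
  rw [neg_neg] at this
  rw [this, hG, integral_const_mul]

lemma trans_caputo (ν α : ℝ) (hν0 : 0 < ν) :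
    ∫ s in Iio (-1:ℝ), ((fun t => max (|t| ^ ν - 1) 0) (-1) - (fun t => max (|t| ^ ν - 1) 0) s) / ((-1:ℝ) - s) ^ (1+α)
      = -∫ x in Ioi (1:ℝ), (x ^ ν - 1) * (x-1) ^ (-α-1) := by
  set G : ℝ → ℝ := fun x => -((x ^ ν - 1) * (x-1) ^ (-α-1)) with hG
  have step1 : ∫ s in Iio (-1:ℝ), ((fun t => max (|t| ^ ν - 1) 0) (-1) - (fun t => max (|t| ^ ν - 1) 0) s) / ((-1:ℝ) - s) ^ (1+α)
      = ∫ s in Iio (-1:ℝ), G (-s) := by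
    apply setIntegral_congr_fun measurableSet_Iio
    intro s hs
    have hs1 : s < -1 := hs
    dsimp only
    have hmax1 : max (|(-1:ℝ)| ^ ν - 1) 0 = 0 := by norm_num
    have habs : |s| = -s := abs_of_neg (by linarith)
    have hge : (1:ℝ) ≤ (-s) ^ ν := by
      have := Real.rpow_le_rpow_of_exponent_le (by linarith : (1:ℝ) ≤ -s) hν0.le
      rwa [Real.rpow_zero] at this
    have hmax2 : max (|s| ^ ν - 1) 0 = (-s) ^ ν - 1 := by
      rw [habs]; exact max_eq_left (by linarith)
    simp only [hmax1, hmax2]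
    rw [div_eq_mul_inv, ← Real.rpow_neg (by linarith : (0:ℝ) ≤ -1-s)]
    simp only [hG]
    rw [show (-1 - s : ℝ) = -s - 1 by ring, show -(1+α) = -α-1 by ring]
    ring
  rw [step1, ← integral_Iic_eq_integral_Iio]
  have := integral_comp_neg_Iic (-1 : ℝ) G
  rw [neg_neg] at this
  rw [this, hG, integral_neg]

lemma I_decomp (ν α : ℝ) (hν0 : 0 < ν) (hν1 : ν ≤ 1) (hνα : ν < α) (hα : α < 1) :
    ∫ x in Ioi (1:ℝ), x ^ (ν-1) * (x-1) ^ (-α)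
      = 1/(1-α) + ((∫ x in Ioc (1:ℝ) 2, (x ^ (ν-1) - 1) * (x-1) ^ (-α))
        + ∫ x in Ioi (2:ℝ), x ^ (ν-1) * (x-1) ^ (-α)) := by
  have hIoc := intOn_A_Ioc ν α hν0 hν1 hα
  have hIoi := intOn_A_Ioi2 ν α hν0 hνα
  have hdiff : IntegrableOn (fun x : ℝ => (x ^ (ν-1) - 1) * (x-1) ^ (-α)) (Ioc 1 2) :=
    (hIoc.sub (intOn_base α hα)).congr (ae_of_all _ fun x => by simp only [Pi.sub_apply]; ring)
  rw [← Ioc_union_Ioi_eq_Ioi (by norm_num : (1:ℝ) ≤ 2),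
    setIntegral_union (Ioc_disjoint_Ioi le_rfl) measurableSet_Ioi hIoc hIoi]
  have hsplit : ∫ x in Ioc (1:ℝ) 2, x ^ (ν-1) * (x-1) ^ (-α)
      = (∫ x in Ioc (1:ℝ) 2, (x-1) ^ (-α)) + ∫ x in Ioc (1:ℝ) 2, (x ^ (ν-1) - 1) * (x-1) ^ (-α) := by
    rw [← integral_add (intOn_base α hα) hdiff]
    exact setIntegral_congr_fun measurableSet_Ioc fun x _ => by ring
  rw [hsplit, int_base_val α hα]
  ring

lemma bd_diff (ν α : ℝ) (hν0 : 0 < ν) (hν1 : ν ≤ 1) (hα0 : 0 ≤ α) (hα : α < 1) :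
    |∫ x in Ioc (1:ℝ) 2, (x ^ (ν-1) - 1) * (x-1) ^ (-α)| ≤ 1 := by
  have h := norm_setIntegral_le_of_norm_le_const (C := 1)
    (s := Ioc (1:ℝ) 2) (f := fun x => (x ^ (ν-1) - 1) * (x-1) ^ (-α))
    (by rw [Real.volume_Ioc]; exact ENNReal.ofReal_lt_top) ?_
  · rw [Real.norm_eq_abs] at h
    calc |∫ x in Ioc (1:ℝ) 2, (x ^ (ν-1) - 1) * (x-1) ^ (-α)| ≤ 1 * (volume (Ioc (1:ℝ) 2)).toReal := h
      _ = 1 := by rw [Real.volume_Ioc]; norm_num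
  · intro x hx
    have hx1 : (1:ℝ) < x := hx.1
    have hx2 : x ≤ 2 := hx.2
    have hb : (0:ℝ) < x - 1 := by linarith
    have h1 : x ^ (ν-1) ≤ 1 := Real.rpow_le_one_of_one_le_of_nonpos hx1.le (by linarith)
    have h2 : x ^ (-1:ℝ) ≤ x ^ (ν-1) := Real.rpow_le_rpow_of_exponent_le hx1.le (by linarith)
    rw [Real.rpow_neg_one] at h2
    have h3 : 1 - x ^ (ν-1) ≤ x - 1 := by
      have hinv : 1 - x⁻¹ = (x-1)/x := by field_simp
      have : (x-1)/x ≤ x - 1 := div_le_self hb.le hx1.le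
      linarith
    rw [Real.norm_eq_abs, abs_mul, abs_of_nonpos (by linarith), abs_of_nonneg (Real.rpow_nonneg hb.le _)]
    calc -(x ^ (ν-1) - 1) * (x-1) ^ (-α) ≤ (x-1) * (x-1) ^ (-α) :=
          mul_le_mul_of_nonneg_right (by linarith) (Real.rpow_nonneg hb.le _)
      _ = (x-1) ^ (1-α) := by
          rw [show (x-1) * (x-1) ^ (-α) = (x-1) ^ (1:ℝ) * (x-1) ^ (-α) by rw [Real.rpow_one],
            ← Real.rpow_add hb, show (1:ℝ) + -α = 1-α by ring]
      _ ≤ 1 := Real.rpow_le_one hb.le (by linarith) (by linarith)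

lemma bd_tail (ν α β : ℝ) (hν0 : 0 < ν) (hνβ : ν < β) (hβα : β ≤ α) :
    |∫ x in Ioi (2:ℝ), x ^ (ν-1) * (x-1) ^ (-α)|
      ≤ ∫ x in Ioi (2:ℝ), x ^ (ν-1) * (x-1) ^ (-β) := by
  have hnn : ∀ x ∈ Ioi (2:ℝ), 0 ≤ x ^ (ν-1) * (x-1) ^ (-α) := fun x hx =>
    mul_nonneg (Real.rpow_nonneg (by have : (2:ℝ) < x := hx; linarith) _)
      (Real.rpow_nonneg (by have : (2:ℝ) < x := hx; linarith) _)
  rw [abs_of_nonneg (setIntegral_nonneg measurableSet_Ioi hnn)]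
  apply setIntegral_mono_on (intOn_A_Ioi2 ν α hν0 (lt_of_lt_of_le hνβ hβα))
    (intOn_A_Ioi2 ν β hν0 hνβ) measurableSet_Ioi
  intro x hx
  have hx2 : (2:ℝ) < x := hx
  exact mul_le_mul_of_nonneg_left
    (Real.rpow_le_rpow_of_exponent_le (by linarith) (by linarith))
    (Real.rpow_nonneg (by linarith) _)

lemma gamma_one_ne : ∀ m : ℕ, (1:ℝ) ≠ -m := by
  intro m h
  have : (0:ℝ) ≤ (m:ℝ) := Nat.cast_nonneg m
  linarith

lemma contGamma2 : ContinuousAt (fun α : ℝ => Real.Gamma (2-α)) 1 := by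
  have hΓ : ContinuousAt Real.Gamma ((fun α : ℝ => 2-α) 1) := by
    norm_num
    exact (Real.differentiableAt_Gamma gamma_one_ne).continuousAt
  exact hΓ.comp (by fun_prop)

lemma tendsto_G2inv : Tendsto (fun α : ℝ => (Real.Gamma (2-α))⁻¹) (𝓝[<] (1:ℝ)) (𝓝 1) := by
  have h : ContinuousAt (fun α : ℝ => (Real.Gamma (2-α))⁻¹) 1 :=
    contGamma2.inv₀ (by norm_num [Real.Gamma_one])
  have := h.tendsto.mono_left (nhdsWithin_le_nhds (s := Iio (1:ℝ)))
  norm_num [Real.Gamma_one] at this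
  exact this

lemma tendsto_G1inv : Tendsto (fun α : ℝ => (Real.Gamma (1-α))⁻¹) (𝓝[<] (1:ℝ)) (𝓝 0) := by
  have heq : ∀ᶠ α in 𝓝[<] (1:ℝ), (1-α) * (Real.Gamma (2-α))⁻¹ = (Real.Gamma (1-α))⁻¹ := by
    filter_upwards [self_mem_nhdsWithin] with α hα
    have h1α : (0:ℝ) < 1-α := by simp only [mem_Iio] at hα; linarith
    have hΓpos : 0 < Real.Gamma (1-α) := Real.Gamma_pos_of_pos h1α
    rw [show (2-α:ℝ) = (1-α)+1 by ring, Real.Gamma_add_one (ne_of_gt h1α), mul_inv]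
    field_simp
  have h : Tendsto (fun α : ℝ => (1-α) * (Real.Gamma (2-α))⁻¹) (𝓝[<] (1:ℝ)) (𝓝 0) := by
    have h1 : Tendsto (fun α : ℝ => 1-α) (𝓝[<] (1:ℝ)) (𝓝 0) := by
      have := ((by fun_prop : Continuous (fun α : ℝ => 1-α)).tendsto 1).mono_left
        (nhdsWithin_le_nhds (s := Iio (1:ℝ)))
      norm_num at this; exact this
    have := h1.mul tendsto_G2inv
    norm_num at this; exact this
  exact h.congr' heq

lemma tendsto_main (ν : ℝ) (hν0 : 0 < ν) (hν1 : ν < 1) :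
    Tendsto (fun α : ℝ => (Real.Gamma (1-α))⁻¹ * ∫ x in Ioi (1:ℝ), x ^ (ν-1) * (x-1) ^ (-α))
      (𝓝[<] (1:ℝ)) (𝓝 1) := by
  set β : ℝ := (1+ν)/2 with hβ
  have hνβ : ν < β := by rw [hβ]; linarith
  have hβ1 : β < 1 := by rw [hβ]; linarith
  have hβ0 : 0 < β := by rw [hβ]; linarith
  set C : ℝ := ∫ x in Ioi (2:ℝ), x ^ (ν-1) * (x-1) ^ (-β) with hC
  set R : ℝ → ℝ := fun α => (∫ x in Ioc (1:ℝ) 2, (x ^ (ν-1) - 1) * (x-1) ^ (-α))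
    + ∫ x in Ioi (2:ℝ), x ^ (ν-1) * (x-1) ^ (-α) with hR
  have hmem : ∀ᶠ α in 𝓝[<] (1:ℝ), α ∈ Ioo β 1 :=
    eventually_of_mem (Ioo_mem_nhdsLT_of_mem ⟨hβ1, le_rfl⟩) (fun x hx => hx)
  have hRbd : ∀ α ∈ Ioo β 1, |R α| ≤ 1 + C := by
    intro α hα
    have h1 := bd_diff ν α hν0 hν1.le (by linarith [hα.1]) hα.2
    have h2 := bd_tail ν α β hν0 hνβ hα.1.le
    calc |R α| ≤ |∫ x in Ioc (1:ℝ) 2, (x ^ (ν-1) - 1) * (x-1) ^ (-α)|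
        + |∫ x in Ioi (2:ℝ), x ^ (ν-1) * (x-1) ^ (-α)| := abs_add_le _ _
      _ ≤ 1 + C := add_le_add h1 h2
  have hzero : Tendsto (fun α : ℝ => (Real.Gamma (1-α))⁻¹ * R α) (𝓝[<] (1:ℝ)) (𝓝 0) := by
    apply squeeze_zero_norm' (a := fun α : ℝ => |(Real.Gamma (1-α))⁻¹| * (1+C))
    · filter_upwards [hmem] with α hα
      rw [Real.norm_eq_abs, abs_mul]
      exact mul_le_mul_of_nonneg_left (hRbd α hα) (abs_nonneg _)
    · have := tendsto_G1inv.abs.mul_const (1+C)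
      norm_num at this ⊢; exact this
  have hsum : Tendsto (fun α : ℝ => (Real.Gamma (2-α))⁻¹ + (Real.Gamma (1-α))⁻¹ * R α)
      (𝓝[<] (1:ℝ)) (𝓝 1) := by
    have := tendsto_G2inv.add hzero
    norm_num at this; exact this
  apply hsum.congr'
  filter_upwards [hmem, self_mem_nhdsWithin] with α hα hα1
  have hα1' : α < 1 := hα1
  have h1α : (0:ℝ) < 1-α := by linarith
  have hΓpos : 0 < Real.Gamma (1-α) := Real.Gamma_pos_of_pos h1α
  rw [I_decomp ν α hν0 hν1.le (lt_trans hνβ hα.1) hα1', mul_add]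
  congr 1
  rw [show (2-α:ℝ) = (1-α)+1 by ring, Real.Gamma_add_one (ne_of_gt h1α), mul_inv, one_div]
  ring

/-- For `0 < ν < α < 1`, the Caputo derivative of `h(t) = max(|t|^ν - 1, 0)` at `t = -1`
equals `(1/Γ(1-α)) ∫_{-∞}^{-1} (-ν|s|^{ν-1})/(-1-s)^α ds`, and this quantity tends
to `-ν` as `α → 1⁻`. -/
theorem caputo_barrier_at_minus_one (ν : ℝ) (hν : 0 < ν) (hν1 : ν < 1) :
    (∀ α : ℝ, ν < α → α < 1 →
        caputo α (fun t => max (|t| ^ ν - 1) 0) (-1) = barrierDeriv α ν) ∧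
    Tendsto (fun α => barrierDeriv α ν) (nhdsWithin (1 : ℝ) (Set.Iio 1)) (nhds (-ν)) := by
  constructor
  · intro α hνα hα1
    unfold caputo barrierDeriv
    rw [trans_caputo ν α hν, trans_barrier ν α hν]
    have key := key_ibp ν α hν hν1.le hνα hα1
    rw [div_mul_eq_mul_div, div_mul_eq_mul_div]
    congr 1
    linarith
  · have h := (tendsto_main ν hν hν1).const_mul (-ν)
    rw [mul_one] at h
    apply h.congr
    intro α
    rw [barrierDeriv, trans_barrier ν α hν, one_div]
    ring
end

section
/- As α → 1⁻, the solution formula u(t) = α ∫_a^t (t-s)^{α-1} E_α'(-C₁(t-s)^α) f(s) ds for the fractional ODE ∂ₜ^α u + C₁ u = f, u(a) = 0, converges pointwise (for continuous bounded f and fixed t > a) to ∫_a^t e^{-C₁(t-s)} f(s) ds. -/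
open Set MeasureTheory Filter intervalIntegral

/-- The Mittag-Leffler function `E_α(t) = ∑ t^j / Γ(jα+1)`. -/
noncomputable def mittagLeffler (α : ℝ) (t : ℝ) : ℝ :=
  ∑' j : ℕ, t ^ j / Real.Gamma (j * α + 1)

open Topology


lemma two_mul_add_one_le_three_pow (k : ℕ) : ((2 * k + 1 : ℕ) : ℝ) ≤ 3 ^ k := by
  have : (2 * k + 1 : ℕ) ≤ 3 ^ k := by
    induction k with
    | zero => norm_num
    | succ n ih =>
      have : 2 * (n + 1) + 1 ≤ 3 * (2 * n + 1) := by omega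
      calc 2 * (n + 1) + 1 ≤ 3 * (2 * n + 1) := this
        _ ≤ 3 * 3 ^ n := by omega
        _ = 3 ^ (n + 1) := by ring
  calc ((2 * k + 1 : ℕ) : ℝ) ≤ ((3 ^ k : ℕ) : ℝ) := by exact_mod_cast this
    _ = 3 ^ k := by push_cast; ring

/-- The master summability lemma. -/
lemma summable_main (R : ℝ) (hR : 0 ≤ R) :
    Summable (fun j : ℕ => ((j : ℝ) + 1) * R ^ j / (Nat.factorial (j / 2) : ℝ)) := by
  apply Summable.even_add_odd
  · -- even part
    have key : Summable (fun k : ℕ => (3 * R ^ 2) ^ k / (Nat.factorial k : ℝ)) :=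
      Real.summable_pow_div_factorial _
    apply Summable.of_nonneg_of_le (fun k => by positivity) (fun k => ?_) key
    have h1 : ((2 * k : ℕ) : ℝ) + 1 = ((2 * k + 1 : ℕ) : ℝ) := by push_cast; ring
    have h2 : (2 * k) / 2 = k := by omega
    rw [h1, h2]
    have hnum : ((2 * k + 1 : ℕ) : ℝ) * R ^ (2 * k) ≤ (3 * R ^ 2) ^ k := by
      have : R ^ (2 * k) = (R ^ 2) ^ k := by rw [← pow_mul]
      rw [this, mul_pow]
      exact mul_le_mul (two_mul_add_one_le_three_pow k) le_rfl (by positivity) (by positivity)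
    exact div_le_div_of_nonneg_right hnum (by positivity) |>.trans_eq rfl
  · -- odd part
    set y := R + 1 with hy
    have hy1 : 1 ≤ y := by simp [hy]; linarith
    have hRy : R ≤ y := by simp [hy]
    have key : Summable (fun k : ℕ => 2 * y ^ 2 * ((3 * y ^ 2) ^ k / (Nat.factorial k : ℝ))) :=
      (Real.summable_pow_div_factorial _).mul_left _
    apply Summable.of_nonneg_of_le (fun k => by positivity) (fun k => ?_) key
    have h2 : (2 * k + 1) / 2 = k := by omega
    rw [h2]
    have hnum : ((2 * k + 1 : ℕ) : ℝ) + 1 ≤ 2 * 3 ^ k := by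
      push_cast
      have := two_mul_add_one_le_three_pow k
      have h3 : (1 : ℝ) ≤ 3 ^ k := one_le_pow₀ (by norm_num)
      push_cast at this
      linarith
    have hpow : R ^ (2 * k + 1) ≤ y ^ 2 * (y ^ 2) ^ k := by
      have h1 : R ^ (2 * k + 1) ≤ y ^ (2 * k + 1) :=
        pow_le_pow_left₀ hR hRy _
      have h2' : y ^ (2 * k + 1) ≤ y ^ (2 * k + 2) :=
        pow_le_pow_right₀ hy1 (by omega)
      have : y ^ (2 * k + 2) = y ^ 2 * (y ^ 2) ^ k := by rw [← pow_mul]; ring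
      linarith [h1, h2'.trans_eq this]
    have hnn : (0:ℝ) ≤ ((2 * k + 1 : ℕ) : ℝ) + 1 := by positivity
    calc (((2 * k + 1 : ℕ) : ℝ) + 1) * R ^ (2 * k + 1) / (Nat.factorial k : ℝ)
        ≤ (2 * 3 ^ k) * (y ^ 2 * (y ^ 2) ^ k) / (Nat.factorial k : ℝ) := by
          apply div_le_div_of_nonneg_right _ (by positivity)
          exact mul_le_mul hnum hpow (by positivity) (by positivity)
      _ = 2 * y ^ 2 * ((3 * y ^ 2) ^ k / (Nat.factorial k : ℝ)) := by
          rw [mul_pow]; ring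

lemma gamma_exists_c : ∃ c : ℝ, 0 < c ∧ c ≤ 1 ∧ ∀ α ∈ Icc (1/2 : ℝ) 1, ∀ j : ℕ,
    c * (Nat.factorial (j / 2) : ℝ) ≤ Real.Gamma ((j : ℝ) * α + 1) := by
  -- continuity of Gamma on [3/2, 2]
  have hcont : ContinuousOn Real.Gamma (Icc (3/2 : ℝ) 2) := by
    intro y hy
    have hypos : (0:ℝ) < y := by linarith [hy.1]
    have : ∀ m : ℕ, y ≠ -m := by
      intro m
      have : -(m:ℝ) ≤ 0 := by simp
      intro h; rw [h] at hypos; linarith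
    exact (Real.differentiableAt_Gamma this).continuousAt.continuousWithinAt
  obtain ⟨y₀, hy₀, hmin⟩ := isCompact_Icc.exists_isMinOn (by norm_num : (Icc (3/2:ℝ) 2).Nonempty) hcont
  have hc₀pos : 0 < Real.Gamma y₀ := Real.Gamma_pos_of_pos (by linarith [hy₀.1])
  refine ⟨min (Real.Gamma y₀) 1, lt_min hc₀pos one_pos, min_le_right _ _, ?_⟩
  intro α hα j
  set c := min (Real.Gamma y₀) 1 with hc
  have hc1 : c ≤ 1 := min_le_right _ _
  match j with
  | 0 =>
    simp only [Nat.cast_zero, zero_mul, zero_add, Real.Gamma_one, Nat.zero_div,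
      Nat.factorial_zero, Nat.cast_one, mul_one]
    exact hc1
  | 1 =>
    have h1 : ((1:ℕ):ℝ) * α + 1 ∈ Icc (3/2:ℝ) 2 := by
      constructor <;> [skip; skip] <;> push_cast <;>
        [linarith [hα.1]; linarith [hα.2]]
    have h2 := hmin h1
    have h3 : c * (Nat.factorial (1 / 2) : ℝ) = c := by norm_num
    rw [h3]
    calc c ≤ Real.Gamma y₀ := min_le_left _ _
      _ ≤ Real.Gamma (((1:ℕ):ℝ) * α + 1) := h2
  | (n+2) =>
    set j := n + 2 with hj
    set k := j / 2 with hk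
    have hk1 : 1 ≤ k := by omega
    have hkj : (k : ℝ) ≤ (j : ℝ) / 2 := Nat.cast_div_le
    have hja : (j : ℝ) / 2 ≤ (j : ℝ) * α := by
      have : (j:ℝ) ≥ 0 := by positivity
      nlinarith [hα.1]
    have hmem1 : ((k:ℝ) + 1) ∈ Ici (2:ℝ) := by
      simp only [mem_Ici]
      have : (1:ℝ) ≤ (k:ℝ) := by exact_mod_cast hk1
      linarith
    have hmem2 : ((j:ℝ) * α + 1) ∈ Ici (2:ℝ) := by
      simp only [mem_Ici]
      have h1 : (1:ℝ) ≤ (k:ℝ) := by exact_mod_cast hk1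
      linarith [hkj.trans hja]
    have hle : ((k:ℝ) + 1) ≤ (j:ℝ) * α + 1 := by linarith [hkj.trans hja]
    have hmono := Real.Gamma_strictMonoOn_Ici.monotoneOn hmem1 hmem2 hle
    rw [Real.Gamma_nat_eq_factorial k] at hmono
    calc c * (Nat.factorial k : ℝ) ≤ 1 * (Nat.factorial k : ℝ) := by
          apply mul_le_mul_of_nonneg_right hc1 (by positivity)
      _ = (Nat.factorial k : ℝ) := one_mul _
      _ ≤ Real.Gamma ((j:ℝ) * α + 1) := hmono
/-- The derivative series of the Mittag-Leffler function. -/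
noncomputable def mlDeriv (α x : ℝ) : ℝ :=
  ∑' j : ℕ, ((j : ℝ) + 1) * x ^ j / Real.Gamma (((j : ℝ) + 1) * α + 1)

noncomputable def mlc : ℝ := gamma_exists_c.choose
lemma mlc_pos : 0 < mlc := gamma_exists_c.choose_spec.1
lemma mlc_le_one : mlc ≤ 1 := gamma_exists_c.choose_spec.2.1
lemma mlc_bound : ∀ α ∈ Icc (1/2 : ℝ) 1, ∀ j : ℕ,
    mlc * (Nat.factorial (j / 2) : ℝ) ≤ Real.Gamma ((j : ℝ) * α + 1) :=
  gamma_exists_c.choose_spec.2.2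

/-- The uniform bound sequence. -/
noncomputable def mlu (R : ℝ) (j : ℕ) : ℝ :=
  mlc⁻¹ * (((j : ℝ) + 1) * R ^ j / (Nat.factorial (j / 2) : ℝ))

lemma summable_mlu (R : ℝ) (hR : 0 ≤ R) : Summable (mlu R) :=
  (summable_main R hR).mul_left _

lemma gamma_pos {α : ℝ} (hα : α ∈ Icc (1/2 : ℝ) 1) (j : ℕ) :
    0 < Real.Gamma ((j : ℝ) * α + 1) := by
  apply Real.Gamma_pos_of_pos
  have h1 : (0:ℝ) ≤ (j:ℝ) * α := by
    apply mul_nonneg (by positivity); linarith [hα.1]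
  linarith

lemma num_le {x R : ℝ} (hx : |x| ≤ R) (j : ℕ) : |x| ^ j ≤ ((j:ℝ) + 1) * R ^ j := by
  have h0 : (0:ℝ) ≤ |x| := abs_nonneg x
  have h1 : |x| ^ j ≤ R ^ j := pow_le_pow_left₀ h0 hx j
  have h2 : (1:ℝ) ≤ (j:ℝ) + 1 := le_add_of_nonneg_left (Nat.cast_nonneg j)
  nlinarith [pow_nonneg (h0.trans hx) j]

lemma div_bound_aux {A B C D : ℝ} (hAB : A ≤ B) (hA : 0 ≤ A) (hD : 0 < D) (hDC : D ≤ C) :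
    A / C ≤ B / D :=
  div_le_div₀ (hA.trans hAB) hAB hD hDC

lemma mlu_eq (R : ℝ) (j : ℕ) :
    (((j:ℝ)+1) * R ^ j) / (mlc * (Nat.factorial (j/2) : ℝ)) = mlu R j := by
  rw [mlu]; field_simp

lemma mlc_factorial_pos (j : ℕ) : 0 < mlc * (Nat.factorial (j/2) : ℝ) := by
  have := mlc_pos
  positivity

lemma bound_b1 {α x R : ℝ} (hα : α ∈ Icc (1/2 : ℝ) 1) (hx : |x| ≤ R) (j : ℕ) :
    ‖x ^ j / Real.Gamma ((j : ℝ) * α + 1)‖ ≤ mlu R j := by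
  rw [Real.norm_eq_abs, abs_div, abs_pow, abs_of_pos (gamma_pos hα j), ← mlu_eq R j]
  exact div_bound_aux (num_le hx j) (by positivity) (mlc_factorial_pos j) (mlc_bound α hα j)
lemma bound_b2 {α x R : ℝ} (hα : α ∈ Icc (1/2 : ℝ) 1) (hx : |x| ≤ R) (hR : 1 ≤ R) (j : ℕ) :
    ‖(j : ℝ) * x ^ (j - 1) / Real.Gamma ((j : ℝ) * α + 1)‖ ≤ mlu R j := by
  rw [Real.norm_eq_abs, abs_div, abs_mul, abs_pow, Nat.abs_cast,
    abs_of_pos (gamma_pos hα j), ← mlu_eq R j]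
  apply div_bound_aux _ (by positivity) (mlc_factorial_pos j) (mlc_bound α hα j)
  -- (j:ℝ) * |x| ^ (j-1) ≤ ((j:ℝ)+1) * R ^ j
  have h0 : (0:ℝ) ≤ |x| := abs_nonneg x
  have hxR : |x| ^ (j-1) ≤ R ^ (j-1) := pow_le_pow_left₀ h0 hx _
  have hRR : R ^ (j-1) ≤ R ^ j := pow_le_pow_right₀ hR (Nat.sub_le j 1)
  have hj : (j:ℝ) ≤ (j:ℝ) + 1 := by linarith
  have hRj : (0:ℝ) ≤ R ^ j := by positivity
  calc (j:ℝ) * |x| ^ (j-1) ≤ (j:ℝ) * R ^ j := by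
        apply mul_le_mul_of_nonneg_left (hxR.trans hRR) (Nat.cast_nonneg j)
    _ ≤ ((j:ℝ)+1) * R ^ j := mul_le_mul_of_nonneg_right hj hRj

lemma bound_b3 {α x R : ℝ} (hα : α ∈ Icc (1/2 : ℝ) 1) (hx : |x| ≤ R) (j : ℕ) :
    ‖((j : ℝ) + 1) * x ^ j / Real.Gamma (((j : ℝ) + 1) * α + 1)‖ ≤ mlu R j := by
  have hcast : ((j : ℝ) + 1) = ((j + 1 : ℕ) : ℝ) := by push_cast; ring
  have hΓpos : 0 < Real.Gamma (((j:ℝ)+1) * α + 1) := by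
    rw [hcast]; exact gamma_pos hα (j+1)
  have hΓ : mlc * (Nat.factorial (j/2) : ℝ) ≤ Real.Gamma (((j:ℝ)+1) * α + 1) := by
    rw [hcast]
    refine le_trans ?_ (mlc_bound α hα (j+1))
    apply mul_le_mul_of_nonneg_left _ mlc_pos.le
    exact_mod_cast Nat.factorial_le (Nat.div_le_div_right (Nat.le_succ j))
  rw [Real.norm_eq_abs, abs_div, abs_mul, abs_pow, abs_of_pos hΓpos, ← mlu_eq R j]
  apply div_bound_aux _ (by positivity) (mlc_factorial_pos j) hΓ
  have h1 : |(j:ℝ)+1| = (j:ℝ)+1 := abs_of_pos (by positivity)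
  rw [h1]
  apply mul_le_mul_of_nonneg_left (pow_le_pow_left₀ (abs_nonneg x) hx j) (by positivity)

lemma summable_ml {α : ℝ} (hα : α ∈ Icc (1/2 : ℝ) 1) (x : ℝ) :
    Summable (fun j : ℕ => x ^ j / Real.Gamma ((j : ℝ) * α + 1)) :=
  Summable.of_norm_bounded (summable_mlu _ (abs_nonneg x)) (bound_b1 hα le_rfl)

lemma ml_hasDerivAt {α : ℝ} (hα : α ∈ Icc (1/2 : ℝ) 1) (x : ℝ) :
    HasDerivAt (mittagLeffler α) (mlDeriv α x) x := by
  set R := |x| + 1 with hR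
  have hR1 : 1 ≤ R := by rw [hR]; linarith [abs_nonneg x]
  have hRnn : (0:ℝ) ≤ R := by linarith
  have hxR : |x| ≤ R := by rw [hR]; linarith
  have hxs : x ∈ Ioo (-R) R := by
    rw [mem_Ioo, ← abs_lt, hR]
    linarith
  have hmem : ∀ y ∈ Ioo (-R) R, |y| ≤ R := fun y hy => by
    rw [abs_le]; exact ⟨hy.1.le, hy.2.le⟩
  have hsum2 : Summable (fun j : ℕ => (j:ℝ) * x ^ (j-1) / Real.Gamma ((j:ℝ) * α + 1)) :=
    Summable.of_norm_bounded (summable_mlu R hRnn)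
      (bound_b2 hα hxR hR1)
  have key : HasDerivAt (fun y => ∑' j : ℕ, y ^ j / Real.Gamma ((j:ℝ) * α + 1))
      (∑' j : ℕ, (j:ℝ) * x ^ (j-1) / Real.Gamma ((j:ℝ) * α + 1)) x := by
    apply hasDerivAt_of_tendstoUniformlyOn (isOpen_Ioo (a := -R) (b := R))
      (tendstoUniformlyOn_tsum (summable_mlu R hRnn)
        (fun j y hy => bound_b2 hα (hmem y hy) hR1 j))
      (f := fun (T : Finset ℕ) y => ∑ j ∈ T, y ^ j / Real.Gamma ((j:ℝ) * α + 1))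
      _ _ hxs
    · filter_upwards with T y hy
      apply HasDerivAt.fun_sum
      intro j _
      simpa using (hasDerivAt_pow j y).div_const (Real.Gamma ((j:ℝ) * α + 1))
    · intro y _
      exact (summable_ml hα y).hasSum
  have heq : (∑' j : ℕ, (j:ℝ) * x ^ (j-1) / Real.Gamma ((j:ℝ) * α + 1)) = mlDeriv α x := by
    rw [Summable.tsum_eq_zero_add hsum2]
    simp only [Nat.cast_zero, zero_mul, zero_div, zero_add]
    rw [mlDeriv]
    congr 1
    funext k
    push_cast
    congr 1
  rw [← heq]
  exact key
lemma mlDeriv_one (x : ℝ) : mlDeriv 1 x = Real.exp x := by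
  rw [Real.exp_eq_exp_ℝ, NormedSpace.exp_eq_tsum_div, mlDeriv]
  congr 1
  funext j
  have h1 : ((j:ℝ) + 1) * 1 + 1 = ((j + 1 : ℕ) : ℝ) + 1 := by push_cast; ring
  rw [h1, Real.Gamma_nat_eq_factorial]
  have h2 : (Nat.factorial (j+1) : ℝ) = ((j:ℝ)+1) * (Nat.factorial j : ℝ) := by
    rw [Nat.factorial_succ]; push_cast; ring
  rw [h2]
  have h3 : ((j:ℝ)+1) ≠ 0 := by positivity
  have h4 : (Nat.factorial j : ℝ) ≠ 0 := by positivity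
  field_simp

lemma mlDeriv_continuousOn (R : ℝ) (hR : 0 ≤ R) :
    ContinuousOn (fun p : ℝ × ℝ => mlDeriv p.1 p.2) (Icc (1/2 : ℝ) 1 ×ˢ Icc (-R) R) := by
  apply continuousOn_tsum (u := mlu R)
    (f := fun j (p : ℝ × ℝ) => ((j : ℝ) + 1) * p.2 ^ j / Real.Gamma (((j : ℝ) + 1) * p.1 + 1))
  · intro j
    apply ContinuousOn.div
    · exact (continuous_const.mul (continuous_snd.pow j)).continuousOn
    · intro p hp
      have hp1 : p.1 ∈ Icc (1/2 : ℝ) 1 := hp.1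
      have hz : 0 < ((j:ℝ)+1) * p.1 + 1 := by nlinarith [hp1.1, Nat.cast_nonneg (α := ℝ) j]
      have hne : ∀ m : ℕ, ((j:ℝ)+1) * p.1 + 1 ≠ -m := by
        intro m h
        have : -(m:ℝ) ≤ 0 := by simp
        rw [h] at hz; linarith
      have hc2 : ContinuousAt (fun p : ℝ × ℝ => ((j:ℝ)+1) * p.1 + 1) p :=
        ((continuous_const.mul continuous_fst).add continuous_const).continuousAt
      exact (ContinuousAt.comp (x := p) (Real.differentiableAt_Gamma hne).continuousAt hc2).continuousWithinAt
    · intro p hp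
      have hp1 : p.1 ∈ Icc (1/2 : ℝ) 1 := hp.1
      have hcast : ((j : ℝ) + 1) = ((j + 1 : ℕ) : ℝ) := by push_cast; ring
      rw [hcast]
      exact (gamma_pos hp1 (j+1)).ne'
  · exact summable_mlu R hR
  · intro j p hp
    exact bound_b3 hp.1 (abs_le.2 ⟨hp.2.1, hp.2.2⟩) j

lemma mlDeriv_continuous {α : ℝ} (hα : α ∈ Icc (1/2 : ℝ) 1) : Continuous (mlDeriv α) := by
  rw [continuous_iff_continuousAt]
  intro x
  set R := |x| + 1 with hR
  have hRnn : (0:ℝ) ≤ R := by rw [hR]; positivity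
  have hco : ContinuousOn (mlDeriv α) (Icc (-R) R) := by
    have := (mlDeriv_continuousOn R hRnn).comp
      (Continuous.continuousOn (by continuity : Continuous fun x : ℝ => (α, x)))
      (fun y hy => Set.mk_mem_prod hα hy)
    exact this
  apply hco.continuousAt
  apply Icc_mem_nhds <;> [rw [hR]; rw [hR]] <;> cases abs_cases x <;> linarith [abs_nonneg x]

lemma mlDeriv_bound {α x R : ℝ} (hα : α ∈ Icc (1/2 : ℝ) 1) (hx : |x| ≤ R) :
    |mlDeriv α x| ≤ ∑' j, mlu R j := by
  rw [← Real.norm_eq_abs, mlDeriv]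
  exact tsum_of_norm_bounded (summable_mlu R ((abs_nonneg x).trans hx)).hasSum
    (fun j => bound_b3 hα hx j)

/-- As `α → 1⁻`, the solution formula
`u(t) = α ∫_a^t (t-s)^{α-1} E_α'(-C₁(t-s)^α) f(s) ds` for the fractional ODE
converges pointwise to `∫_a^t e^{-C₁(t-s)} f(s) ds`. -/
theorem fracODESol_tendsto_classical (a t C₁ : ℝ) (hC₁ : 0 < C₁)
    (f : ℝ → ℝ) (hf : Continuous f) (hbd : ∃ M, ∀ x, |f x| ≤ M) (ht : a < t) :
    Tendsto
      (fun α : ℝ => α * ∫ s in a..t,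
        (t - s) ^ (α - 1) * deriv (mittagLeffler α) (-C₁ * (t - s) ^ α) * f s)
      (nhdsWithin (1 : ℝ) (Set.Iio 1))
      (nhds (∫ s in a..t, Real.exp (-C₁ * (t - s)) * f s)) := by
  obtain ⟨M, hM⟩ := hbd
  have hMnn : 0 ≤ M := (abs_nonneg (f a)).trans (hM a)
  set l := nhdsWithin (1 : ℝ) (Set.Iio 1) with hl
  have hEv : Ioo (1/2 : ℝ) 1 ∈ l := Ioo_mem_nhdsLT_of_mem (by constructor <;> norm_num)
  set R := C₁ * max 1 (t - a) with hR
  have hRnn : 0 ≤ R := by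
    apply mul_nonneg hC₁.le (le_trans zero_le_one (le_max_left _ _))
  set K := ∑' j, mlu R j with hK
  have hKnn : 0 ≤ K := by
    apply tsum_nonneg
    intro j
    rw [mlu]
    have := mlc_pos
    positivity
  have hα1 : Tendsto (fun α : ℝ => α) l (𝓝 1) := tendsto_id.mono_left nhdsWithin_le_nhds
  set G : ℝ → ℝ → ℝ :=
    fun α s => (t - s) ^ (α - 1) * mlDeriv α (-C₁ * (t - s) ^ α) * f s with hG
  -- the argument of mlDeriv stays in [-R, R]
  have hxmem : ∀ α ∈ Icc (1/2 : ℝ) 1, ∀ s ∈ Ioc a t, |(-C₁) * (t - s) ^ α| ≤ R := by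
    intro α hα s hs
    have hts : 0 ≤ t - s := by linarith [hs.2]
    have hrp : (t - s) ^ α ≤ max 1 (t - a) := by
      rcases le_or_gt (t - s) 1 with h1 | h1
      · exact le_trans (Real.rpow_le_one hts h1 (by linarith [hα.1])) (le_max_left _ _)
      · calc (t - s) ^ α ≤ (t - s) ^ (1:ℝ) :=
              Real.rpow_le_rpow_of_exponent_le h1.le hα.2
          _ = t - s := Real.rpow_one _
          _ ≤ t - a := by linarith [hs.1]
          _ ≤ max 1 (t - a) := le_max_right _ _
    rw [abs_mul, abs_neg, abs_of_pos hC₁, abs_of_nonneg (Real.rpow_nonneg hts α), hR]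
    exact mul_le_mul_of_nonneg_left hrp hC₁.le
  -- dominated convergence
  have hDCT : Tendsto (fun α => ∫ s in a..t, G α s) l
      (𝓝 (∫ s in a..t, Real.exp (-C₁ * (t - s)) * f s)) := by
    apply intervalIntegral.tendsto_integral_filter_of_dominated_convergence
      (bound := fun s => ((t - s) ^ (-(1/2) : ℝ) + 1) * (K * M))
    · -- measurability
      filter_upwards [hEv] with α hα
      have hIcc : α ∈ Icc (1/2 : ℝ) 1 := ⟨hα.1.le, hα.2.le⟩
      rw [uIoc_of_le ht.le, ← Measure.restrict_congr_set Ioo_ae_eq_Ioc]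
      apply ContinuousOn.aestronglyMeasurable _ measurableSet_Ioo
      have c1 : ContinuousOn (fun s => (t - s) ^ (α - 1)) (Ioo a t) := by
        intro s hs
        have hts : 0 < t - s := sub_pos.2 hs.2
        exact (ContinuousAt.comp (x := s)
          (Real.continuousAt_rpow_const (t - s) (α - 1) (Or.inl hts.ne'))
          ((continuous_const.sub continuous_id).continuousAt)).continuousWithinAt
      have c2 : ContinuousOn (fun s => mlDeriv α (-C₁ * (t - s) ^ α)) (Ioo a t) := by
        apply Continuous.comp_continuousOn (mlDeriv_continuous hIcc)
        apply ContinuousOn.mul continuousOn_const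
        intro s hs
        have hts : 0 < t - s := sub_pos.2 hs.2
        exact (ContinuousAt.comp (x := s)
          (Real.continuousAt_rpow_const (t - s) α (Or.inl hts.ne'))
          ((continuous_const.sub continuous_id).continuousAt)).continuousWithinAt
      exact (c1.mul c2).mul hf.continuousOn
    · -- bound
      filter_upwards [hEv] with α hα
      have hIcc : α ∈ Icc (1/2 : ℝ) 1 := ⟨hα.1.le, hα.2.le⟩
      apply Eventually.of_forall
      intro s hs
      rw [uIoc_of_le ht.le] at hs
      have hts : 0 ≤ t - s := by linarith [hs.2]
      have hrnn : 0 ≤ (t - s) ^ (-(1/2) : ℝ) := Real.rpow_nonneg hts _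
      have h1 : (t - s) ^ (α - 1) ≤ (t - s) ^ (-(1/2) : ℝ) + 1 := by
        rcases eq_or_lt_of_le hts with h0 | h0
        · rw [← h0, Real.zero_rpow (by intro h; rw [sub_eq_zero] at h; linarith [hα.2] : α - 1 ≠ 0),
            Real.zero_rpow (by norm_num : (-(1/2):ℝ) ≠ 0)]
          linarith
        · rcases le_or_gt (t - s) 1 with h2 | h2
          · have := Real.rpow_le_rpow_of_exponent_ge h0 h2
              (by linarith [hα.1] : -(1/2 : ℝ) ≤ α - 1)
            linarith
          · have h3 : (t - s) ^ (α - 1) ≤ (t - s) ^ (0:ℝ) :=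
              Real.rpow_le_rpow_of_exponent_le h2.le (by linarith [hα.2])
            rw [Real.rpow_zero] at h3
            linarith
      have h2 : |mlDeriv α (-C₁ * (t - s) ^ α)| ≤ K := by
        rw [hK]
        exact mlDeriv_bound hIcc (by simpa using hxmem α hIcc s hs)
      rw [hG]
      simp only [Real.norm_eq_abs]
      rw [abs_mul, abs_mul, abs_of_nonneg (Real.rpow_nonneg hts (α - 1))]
      calc (t - s) ^ (α - 1) * |mlDeriv α (-C₁ * (t - s) ^ α)| * |f s|
          ≤ ((t - s) ^ (-(1/2) : ℝ) + 1) * K * M := by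
            apply mul_le_mul _ (hM s) (abs_nonneg _) _
            · exact mul_le_mul h1 h2 (abs_nonneg _) (by linarith)
            · apply mul_nonneg (by linarith) hKnn
        _ = ((t - s) ^ (-(1/2) : ℝ) + 1) * (K * M) := by ring
    · -- integrability of the bound
      apply IntervalIntegrable.mul_const
      apply IntervalIntegrable.add _ intervalIntegrable_const
      have h := (intervalIntegrable_rpow' (a := t - a) (b := 0)
        (by norm_num : (-1:ℝ) < -(1/2))).comp_sub_left t
      simpa using h
    · -- pointwise limit
      have hae : ∀ᵐ s : ℝ, s ≠ t := compl_mem_ae_iff.2 (measure_singleton t)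
      filter_upwards [hae] with s hsne hsmem
      rw [uIoc_of_le ht.le] at hsmem
      have hts : 0 < t - s := sub_pos.2 (lt_of_le_of_ne hsmem.2 hsne)
      -- limit of the rpow factor
      have hA : Tendsto (fun α : ℝ => (t - s) ^ (α - 1)) l (𝓝 1) := by
        have hc : ContinuousAt (fun α : ℝ => (t - s) ^ (α - 1)) 1 :=
          ContinuousAt.comp (f := fun α : ℝ => ((t - s), α - 1)) (x := (1:ℝ))
            (Real.continuousAt_rpow ((t - s), (1:ℝ) - 1) (Or.inl hts.ne'))
            ((continuous_const.prodMk (continuous_id.sub continuous_const)).continuousAt)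
        have h2 : Tendsto (fun α : ℝ => (t - s) ^ (α - 1)) l (𝓝 ((t - s) ^ ((1:ℝ) - 1))) :=
          hc.tendsto.mono_left nhdsWithin_le_nhds
        rw [sub_self, Real.rpow_zero] at h2
        exact h2
      -- limit of the inner argument
      have hB : Tendsto (fun α : ℝ => -C₁ * (t - s) ^ α) l (𝓝 (-C₁ * (t - s))) := by
        have hc : ContinuousAt (fun α : ℝ => (t - s) ^ α) 1 :=
          ContinuousAt.comp (f := fun α : ℝ => ((t - s), α)) (x := (1:ℝ))
            (Real.continuousAt_rpow ((t - s), (1:ℝ)) (Or.inl hts.ne'))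
            ((continuous_const.prodMk continuous_id).continuousAt)
        have h0 : Tendsto (fun α : ℝ => (t - s) ^ α) l (𝓝 ((t - s) ^ (1:ℝ))) :=
          hc.tendsto.mono_left nhdsWithin_le_nhds
        have h2 := (tendsto_const_nhds (x := -C₁)).mul h0
        rw [Real.rpow_one] at h2
        exact h2
      -- limit of the mlDeriv factor
      have hML : Tendsto (fun α : ℝ => mlDeriv α (-C₁ * (t - s) ^ α)) l
          (𝓝 (Real.exp (-C₁ * (t - s)))) := by
        set R' := C₁ * (t - s) + 1 with hR'
        have hR'nn : 0 ≤ R' := by nlinarith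
        have hx₀ : -C₁ * (t - s) ∈ Ioo (-R') R' := by
          constructor <;> [rw [hR']; rw [hR']] <;> nlinarith
        have hmemS : ((1:ℝ), -C₁ * (t - s)) ∈ Icc (1/2 : ℝ) 1 ×ˢ Icc (-R') R' := by
          constructor
          · constructor <;> norm_num
          · exact ⟨hx₀.1.le, hx₀.2.le⟩
        have hcw := (mlDeriv_continuousOn R' hR'nn).continuousWithinAt hmemS
        have hpair : Tendsto (fun α : ℝ => (α, -C₁ * (t - s) ^ α)) l
            (𝓝[Icc (1/2 : ℝ) 1 ×ˢ Icc (-R') R'] ((1:ℝ), -C₁ * (t - s))) := by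
          rw [tendsto_nhdsWithin_iff]
          constructor
          · exact hα1.prodMk_nhds hB
          · filter_upwards [hEv, hB.eventually (Ioo_mem_nhds hx₀.1 hx₀.2)] with α h1 h2
            exact ⟨⟨h1.1.le, h1.2.le⟩, ⟨h2.1.le, h2.2.le⟩⟩
        have := hcw.tendsto.comp hpair
        rw [mlDeriv_one] at this
        exact this
      have := (hA.mul hML).mul (tendsto_const_nhds (x := f s))
      rw [one_mul] at this
      exact this
  -- assemble
  have hfinal := hα1.mul hDCT
  rw [one_mul] at hfinal
  apply hfinal.congr'
  filter_upwards [hEv] with α hα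
  have hIcc : α ∈ Icc (1/2 : ℝ) 1 := ⟨hα.1.le, hα.2.le⟩
  have hd : deriv (mittagLeffler α) = mlDeriv α :=
    funext fun y => (ml_hasDerivAt hIcc y).deriv
  rw [hG, hd]
end
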